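/- arXiv:1104.1875 — 9 statements merged into one kernel-verified Lean document; each statement's English description precedes it below -/
import Mathlib

section
/- Let m be a positive integer not divisible by 3 and set λ = 16π²m²/9, u₁(x) = sin(√λ·x)/√λ and u₂(x) = sin(√λ·(1−x))/√λ. Then u₁''(x) + λ·u₁(x) = 0 for all x, u₂''(x) + λ·u₂(x) = 0 for all x, u₁(0) = 0, u₂(1) = 0, u₁'(0) = 1, u₂(1/2) = u₁(1/2), and u₂'(1/2) − u₁'(1/2) = 1. -/
open Real

/-!
With `s = √λ = 4πm/3`, both `u₁` and `u₂` are sine waves of frequency `s` divided by `s`, so they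
solve `u'' + s²u = 0`, vanish at the outer endpoints, have `u₁'(0) = 1`, and agree at `1/2` by
symmetry. The derivative jump at `1/2` is `-2 cos (s/2) = -2 cos (2πm/3)`, and `cos (2πm/3)`
depends only on `m mod 3`, which makes it `-1/2` when `3 ∤ m`.
-/

theorem cos_two_pi_mul_div_three_of_not_dvd {m : ℤ} (hm : ¬ 3 ∣ m) :
    cos (2 * π * m / 3) = -(1 / 2) := by
  have hshift : 2 * π * m / 3 = 2 * π * (m % 3 : ℤ) / 3 + (m / 3 : ℤ) * (2 * π) := by
    conv_lhs => rw [← Int.emod_add_mul_ediv m 3]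
    push_cast
    ring
  rw [hshift, cos_add_int_mul_two_pi]
  rcases (by omega : m % 3 = 1 ∨ m % 3 = 2) with h | h <;> rw [h] <;> push_cast
  · rw [show 2 * π * 1 / 3 = π - π / 3 by ring, cos_pi_sub, cos_pi_div_three]
  · rw [show 2 * π * 2 / 3 = π / 3 + π by ring, cos_add_pi, cos_pi_div_three]

theorem deriv_deriv_add_mul_eq_zero {f g : ℝ → ℝ} {c : ℝ} (hf : ∀ x, HasDerivAt f (g x) x)
    (hg : ∀ x, HasDerivAt g (-(c * f x)) x) (x : ℝ) : deriv (deriv f) x + c * f x = 0 := by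
  rw [show deriv f = g from funext fun y => (hf y).deriv, (hg x).deriv, neg_add_cancel]

theorem hasDerivAt_sin_mul_div {s : ℝ} (hs : s ≠ 0) (x : ℝ) :
    HasDerivAt (fun y => sin (s * y) / s) (cos (s * x)) x :=
  (((hasDerivAt_id' x).const_mul s).sin.div_const s).congr_deriv (by field_simp)

theorem hasDerivAt_sin_mul_sub_div {s : ℝ} (hs : s ≠ 0) (a x : ℝ) :
    HasDerivAt (fun y => sin (s * (a - y)) / s) (-cos (s * (a - x))) x :=
  ((((hasDerivAt_id' x).const_sub a).const_mul s).sin.div_const s).congr_deriv (by field_simp)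

theorem deriv_deriv_sin_mul_div_add {s : ℝ} (hs : s ≠ 0) (x : ℝ) :
    deriv (deriv fun y => sin (s * y) / s) x + s ^ 2 * (sin (s * x) / s) = 0 :=
  deriv_deriv_add_mul_eq_zero (hasDerivAt_sin_mul_div hs)
    (fun y => ((hasDerivAt_id' y).const_mul s).cos.congr_deriv (by field_simp)) x

theorem deriv_deriv_sin_mul_sub_div_add {s : ℝ} (hs : s ≠ 0) (a x : ℝ) :
    deriv (deriv fun y => sin (s * (a - y)) / s) x + s ^ 2 * (sin (s * (a - x)) / s) = 0 :=
  deriv_deriv_add_mul_eq_zero (hasDerivAt_sin_mul_sub_div hs a)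
    (fun y => (((hasDerivAt_id' y).const_sub a).const_mul s).cos.neg.congr_deriv
      (by field_simp)) x

theorem stmt_0_general (m : ℕ) (hm3 : ¬ (3 ∣ m))
    (lam : ℝ) (hlam : lam = 16 * π ^ 2 * (m : ℝ) ^ 2 / 9)
    (u₁ u₂ : ℝ → ℝ)
    (hu₁ : ∀ x, u₁ x = Real.sin (Real.sqrt lam * x) / Real.sqrt lam)
    (hu₂ : ∀ x, u₂ x = Real.sin (Real.sqrt lam * (1 - x)) / Real.sqrt lam) :
    (∀ x, deriv (deriv u₁) x + lam * u₁ x = 0) ∧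
    (∀ x, deriv (deriv u₂) x + lam * u₂ x = 0) ∧
    u₁ 0 = 0 ∧ u₂ 1 = 0 ∧ deriv u₁ 0 = 1 ∧
    u₂ (1/2) = u₁ (1/2) ∧
    deriv u₂ (1/2) - deriv u₁ (1/2) = 1 := by
  set s : ℝ := 2 * (2 * π * m / 3) with hs_def
  have hm0 : (m : ℝ) ≠ 0 := Nat.cast_ne_zero.mpr (by rintro rfl; exact hm3 (dvd_zero 3))
  have hs : s ≠ 0 := by simp [hs_def, hm0, pi_ne_zero]
  have hlam_s : lam = s ^ 2 := by rw [hlam, hs_def]; ring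
  have hsqrt : √lam = s := by rw [hlam_s]; exact sqrt_sq (by positivity)
  obtain rfl : u₁ = fun y => sin (s * y) / s := funext fun y => by rw [hu₁, hsqrt]
  obtain rfl : u₂ = fun y => sin (s * (1 - y)) / s := funext fun y => by rw [hu₂, hsqrt]
  have hcos : cos (s / 2) = -(1 / 2) := by
    rw [hs_def, mul_div_cancel_left₀ _ two_ne_zero]
    exact_mod_cast cos_two_pi_mul_div_three_of_not_dvd (Int.natCast_dvd_natCast.not.mpr hm3)
  refine ⟨fun x => hlam_s ▸ deriv_deriv_sin_mul_div_add hs x,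
    fun x => hlam_s ▸ deriv_deriv_sin_mul_sub_div_add hs 1 x, by simp, by simp,
    by simp [(hasDerivAt_sin_mul_div hs 0).deriv], by norm_num, ?_⟩
  rw [(hasDerivAt_sin_mul_sub_div hs 1 _).deriv, (hasDerivAt_sin_mul_div hs _).deriv]
  rw [show s * (1 - 1 / 2) = s / 2 by ring, show s * (1 / 2) = s / 2 by ring, hcos]
  norm_num

/-- first family of base eigensolutions of the transmission problem. -/
theorem stmt_0 (m : ℕ) (hm : 0 < m) (hm3 : ¬ (3 ∣ m))
    (lam : ℝ) (hlam : lam = 16 * π ^ 2 * (m : ℝ) ^ 2 / 9)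
    (u₁ u₂ : ℝ → ℝ)
    (hu₁ : ∀ x, u₁ x = Real.sin (Real.sqrt lam * x) / Real.sqrt lam)
    (hu₂ : ∀ x, u₂ x = Real.sin (Real.sqrt lam * (1 - x)) / Real.sqrt lam) :
    (∀ x, deriv (deriv u₁) x + lam * u₁ x = 0) ∧
    (∀ x, deriv (deriv u₂) x + lam * u₂ x = 0) ∧
    u₁ 0 = 0 ∧ u₂ 1 = 0 ∧ deriv u₁ 0 = 1 ∧
    u₂ (1/2) = u₁ (1/2) ∧
    deriv u₂ (1/2) - deriv u₁ (1/2) = 1 :=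
  stmt_0_general m hm3 lam hlam u₁ u₂ hu₁ hu₂
end

section
/- Let λ > 0 and c₂ ∈ ℝ satisfy the two matching equations −c₂·sin(√λ/2) + sin(√λ/2)/√λ = 0 and c₂·√λ·cos(√λ/2) + cos(√λ/2) = −1. Then either there exists a positive integer n with λ = 4π²n², or there exists a positive integer m not divisible by 3 with λ = 16π²m²/9. -/
open Real

/-- classification of the eigenvalues of the base transmission problem. -/
theorem stmt_2 (lam c₂ : ℝ) (hlam : 0 < lam)
    (h1 : -c₂ * Real.sin (Real.sqrt lam / 2) +
      Real.sin (Real.sqrt lam / 2) / Real.sqrt lam = 0)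
    (h2 : c₂ * Real.sqrt lam * Real.cos (Real.sqrt lam / 2) +
      Real.cos (Real.sqrt lam / 2) = -1) :
    (∃ n : ℕ, 0 < n ∧ lam = 4 * π ^ 2 * (n : ℝ) ^ 2) ∨
    (∃ m : ℕ, 0 < m ∧ ¬ (3 ∣ m) ∧ lam = 16 * π ^ 2 * (m : ℝ) ^ 2 / 9) := by
  set s := Real.sqrt lam with hsdef
  have hs : 0 < s := Real.sqrt_pos.mpr hlam
  have hlamse : lam = s ^ 2 := (Real.sq_sqrt hlam.le).symm
  have hpi : (0:ℝ) < π := Real.pi_pos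
  by_cases hsin : Real.sin (s / 2) = 0
  · -- λ = 4π²n²
    left
    obtain ⟨k, hk⟩ := Real.sin_eq_zero_iff.mp hsin
    have hkpos : 0 < k := by
      by_contra h
      push_neg at h
      have : (k : ℝ) * π ≤ 0 :=
        mul_nonpos_of_nonpos_of_nonneg (by exact_mod_cast h) hpi.le
      linarith [hk, hs]
    refine ⟨k.toNat, by omega, ?_⟩
    have hkc : ((k.toNat : ℤ) : ℝ) = (k : ℝ) := by
      congr 1; omega
    push_cast at hkc ⊢
    rw [hlamse]
    have hseq : s = 2 * k * π := by linarith [hk]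
    rw [hseq, hkc]
    ring
  · right
    -- c₂ = 1/s
    have hc₂ : c₂ = 1 / s := by
      have : Real.sin (s / 2) * (1 / s - c₂) = 0 := by
        field_simp at h1 ⊢
        linarith
      rcases mul_eq_zero.mp this with h | h
      · exact absurd h hsin
      · linarith
    have hcos : Real.cos (s / 2) = -(1/2) := by
      rw [hc₂] at h2
      field_simp at h2
      linarith
    have h23 : Real.cos (2 * π / 3) = -(1/2) := by
      have := Real.cos_pi_div_three
      have h2p3 : 2 * π / 3 = π - π / 3 := by ring
      rw [h2p3, Real.cos_pi_sub, this]
    rw [← h23] at hcos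
    obtain ⟨k, hk | hk⟩ := Real.cos_eq_cos_iff.mp hcos.symm
    · -- s/2 = 2kπ + 2π/3, s = (4π/3)(3k+1)
      have hseq : s = 4 * π / 3 * (3 * k + 1) := by
        push_cast; linarith [hk]
      have hmpos : 0 < 3 * k + 1 := by
        by_contra h
        push_neg at h
        have h' : ((3:ℝ) * k + 1) ≤ 0 := by exact_mod_cast h
        have : s ≤ 0 := by
          rw [hseq]; exact mul_nonpos_of_nonneg_of_nonpos (by positivity) h'
        linarith
      refine ⟨(3*k+1).toNat, by omega, by omega, ?_⟩
      have hkc : (((3*k+1).toNat : ℤ) : ℝ) = ((3*k+1 : ℤ) : ℝ) := by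
        congr 1; omega
      push_cast at hkc ⊢
      rw [hlamse, hseq, hkc]
      ring
    · -- s/2 = 2kπ - 2π/3, s = (4π/3)(3k-1)
      have hseq : s = 4 * π / 3 * (3 * k - 1) := by
        push_cast; linarith [hk]
      have hmpos : 0 < 3 * k - 1 := by
        by_contra h
        push_neg at h
        have h' : ((3:ℝ) * k - 1) ≤ 0 := by exact_mod_cast h
        have : s ≤ 0 := by
          rw [hseq]; exact mul_nonpos_of_nonneg_of_nonpos (by positivity) h'
        linarith
      refine ⟨(3*k-1).toNat, by omega, by omega, ?_⟩
      have hkc : (((3*k-1).toNat : ℤ) : ℝ) = ((3*k-1 : ℤ) : ℝ) := by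
        congr 1; omega
      push_cast at hkc ⊢
      rw [hlamse, hseq, hkc]
      ring
end

section
/- Let m be a positive integer not divisible by 3 and λ = 16π²m²/9. Let F₁ be integrable on (0,1/2), F₂ be integrable on (1/2,1), set c₂ = (1/sin(√λ/2))·[∫₀^{1/2} (sin(√λ(1/2−ξ))/√λ)·F₁(ξ) dξ + ∫_{1/2}^{1} (sin(√λ(1/2−ξ))/√λ)·F₂(ξ) dξ], and define u₁(x) = ∫₀^x (sin(√λ(x−ξ))/√λ)·F₁(ξ) dξ for x ∈ [0,1/2] and u₂(x) = c₂·sin(√λ(1−x)) − ∫_x^1 (sin(√λ(x−ξ))/√λ)·F₂(ξ) dξ for x ∈ [1/2,1]. Then max( sup_{x∈[0,1/2]} |u₁(x)|, sup_{x∈[1/2,1]} |u₂(x)| ) ≤ ((2+√3)/(√3·√λ))·(∫₀^{1/2}|F₁(ξ)| dξ + ∫_{1/2}^{1}|F₂(ξ)| dξ). -/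
/-!
Since `|sin| ≤ 1`, every integral `∫ sin (L * (x - ξ)) / L * F ξ` over a subinterval is bounded
by `(1 / L) ∫ |F|`. With `I = ∫₀^{1/2} |F₁| + ∫_{1/2}^1 |F₂|` this gives `|u₁| ≤ I / L`,
`|c₂| ≤ I / (|sin (L / 2)| L)` and `|u₂| ≤ |c₂| + I / L`, i.e. the constant
`(1 + 1 / |sin (L / 2)|) / L` for any `L = √λ ≥ 0`. For `λ = 16π²m²/9` we have
`√λ / 2 = 2πm/3`, whose sine has modulus `√3 / 2` when `3 ∤ m`, and `1 + 2 / √3 = (2 + √3) / √3`.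
-/

open Real MeasureTheory

lemma abs_sin_two_pi_mul_div_three {m : ℤ} (hm : ¬ 3 ∣ m) :
    |sin (2 * π * m / 3)| = √3 / 2 := by
  have hr : m % 3 = 1 ∨ m % 3 = 2 := by omega
  have hsplit : 2 * π * m / 3 = 2 * π * ((m % 3 : ℤ) : ℝ) / 3 + (m / 3 : ℤ) * (2 * π) := by
    have hdiv : (m : ℝ) = ((m % 3 : ℤ) : ℝ) + 3 * ((m / 3 : ℤ) : ℝ) := by
      exact_mod_cast (Int.emod_add_mul_ediv m 3).symm
    rw [hdiv]
    ring
  rw [hsplit, sin_add_int_mul_two_pi]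
  rcases hr with h | h <;> rw [h]
  · rw [show 2 * π * ((1 : ℤ) : ℝ) / 3 = π - π / 3 by push_cast; ring, sin_pi_sub,
      sin_pi_div_three, abs_of_nonneg (by positivity)]
  · rw [show 2 * π * ((2 : ℤ) : ℝ) / 3 = π / 3 + π by push_cast; ring, sin_add_pi,
      sin_pi_div_three, abs_neg, abs_of_nonneg (by positivity)]

lemma abs_integral_sin_kernel_mul_le {L a b c d : ℝ} (hL : 0 ≤ L) (hac : a ≤ c) (hcd : c ≤ d)
    (hdb : d ≤ b) {F : ℝ → ℝ} (hF : IntervalIntegrable F volume a b) (x : ℝ) :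
    |∫ ξ in c..d, sin (L * (x - ξ)) / L * F ξ| ≤ (∫ ξ in a..b, |F ξ|) / L := by
  have hFcd : IntervalIntegrable F volume c d :=
    hF.mono_set (Set.uIcc_subset_uIcc (Set.mem_uIcc_of_le hac (hcd.trans hdb))
      (Set.mem_uIcc_of_le (hac.trans hcd) hdb))
  calc |∫ ξ in c..d, sin (L * (x - ξ)) / L * F ξ|
      ≤ ∫ ξ in c..d, |F ξ| / L := by
        rw [← norm_eq_abs]
        refine intervalIntegral.norm_integral_le_of_norm_le hcd (ae_of_all _ fun ξ _ => ?_)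
          (hFcd.abs.div_const L)
        rw [norm_eq_abs, abs_mul, abs_div, abs_of_nonneg hL, div_mul_eq_mul_div]
        exact div_le_div_of_nonneg_right
          (mul_le_of_le_one_left (abs_nonneg _) (abs_sin_le_one _)) hL
    _ = (∫ ξ in c..d, |F ξ|) / L := intervalIntegral.integral_div _ _
    _ ≤ (∫ ξ in a..b, |F ξ|) / L := by
        gcongr
        exact intervalIntegral.integral_mono_interval hac hcd hdb
          (ae_of_all _ fun _ => abs_nonneg _) hF.abs

section TwoIntervalProblem

variable {L c₂ : ℝ} {F₁ F₂ u₁ u₂ : ℝ → ℝ}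

lemma abs_matching_coeff_le (hL : 0 ≤ L) (hF₁ : IntervalIntegrable F₁ volume 0 (1/2))
    (hF₂ : IntervalIntegrable F₂ volume (1/2) 1)
    (hc₂ : c₂ = (1 / sin (L / 2)) *
      ((∫ ξ in (0:ℝ)..(1/2), (sin (L * (1/2 - ξ)) / L) * F₁ ξ) +
       ∫ ξ in (1/2:ℝ)..1, (sin (L * (1/2 - ξ)) / L) * F₂ ξ)) :
    |c₂| ≤ |sin (L / 2)|⁻¹ * (((∫ ξ in (0:ℝ)..(1/2), |F₁ ξ|) + ∫ ξ in (1/2:ℝ)..1, |F₂ ξ|) / L) := by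
  rw [hc₂, abs_mul, one_div, abs_inv, add_div]
  gcongr
  exact (abs_add_le _ _).trans (add_le_add
    (abs_integral_sin_kernel_mul_le hL le_rfl (by norm_num) le_rfl hF₁ _)
    (abs_integral_sin_kernel_mul_le hL le_rfl (by norm_num) le_rfl hF₂ _))

/- No hypothesis `sin (L / 2) ≠ 0` is needed: when it fails, `1 / 0 = 0` makes `c₂ = 0` and
the bound still holds. -/
theorem sup_abs_le_of_variation_of_constants (hL : 0 ≤ L)
    (hF₁ : IntervalIntegrable F₁ volume 0 (1/2)) (hF₂ : IntervalIntegrable F₂ volume (1/2) 1)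
    (hc₂ : c₂ = (1 / sin (L / 2)) *
      ((∫ ξ in (0:ℝ)..(1/2), (sin (L * (1/2 - ξ)) / L) * F₁ ξ) +
       ∫ ξ in (1/2:ℝ)..1, (sin (L * (1/2 - ξ)) / L) * F₂ ξ))
    (hu₁ : ∀ x ∈ Set.Icc (0:ℝ) (1/2), u₁ x = ∫ ξ in (0:ℝ)..x, (sin (L * (x - ξ)) / L) * F₁ ξ)
    (hu₂ : ∀ x ∈ Set.Icc (1/2:ℝ) 1,
      u₂ x = c₂ * sin (L * (1 - x)) - ∫ ξ in x..(1:ℝ), (sin (L * (x - ξ)) / L) * F₂ ξ) :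
    max (⨆ x : Set.Icc (0:ℝ) (1/2), |u₁ x|) (⨆ x : Set.Icc (1/2:ℝ) 1, |u₂ x|) ≤
      (1 + |sin (L / 2)|⁻¹) / L * ((∫ ξ in (0:ℝ)..(1/2), |F₁ ξ|) + ∫ ξ in (1/2:ℝ)..1, |F₂ ξ|) := by
  set I₁ := ∫ ξ in (0:ℝ)..(1/2), |F₁ ξ|
  set I₂ := ∫ ξ in (1/2:ℝ)..1, |F₂ ξ|
  have hI₁ : 0 ≤ I₁ := intervalIntegral.integral_nonneg (by norm_num) fun _ _ => abs_nonneg _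
  have hI₂ : 0 ≤ I₂ := intervalIntegral.integral_nonneg (by norm_num) fun _ _ => abs_nonneg _
  have hbound : (1 + |sin (L / 2)|⁻¹) / L * (I₁ + I₂) =
      (I₁ + I₂) / L + |sin (L / 2)|⁻¹ * ((I₁ + I₂) / L) := by
    ring
  have hu₁_le : ∀ x ∈ Set.Icc (0:ℝ) (1/2), |u₁ x| ≤ (I₁ + I₂) / L := fun x hx => by
    rw [hu₁ x hx]
    refine (abs_integral_sin_kernel_mul_le hL le_rfl hx.1 hx.2 hF₁ x).trans ?_
    gcongr
    linarith
  have hu₂_le : ∀ x ∈ Set.Icc (1/2:ℝ) 1, |u₂ x| ≤ |c₂| + (I₁ + I₂) / L := fun x hx => by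
    rw [hu₂ x hx]
    refine (abs_sub _ _).trans (add_le_add ?_ ?_)
    · rw [abs_mul]
      exact mul_le_of_le_one_right (abs_nonneg _) (abs_sin_le_one _)
    · refine (abs_integral_sin_kernel_mul_le hL hx.1 hx.2 le_rfl hF₂ x).trans ?_
      gcongr
      linarith
  have hc₂_le := abs_matching_coeff_le hL hF₁ hF₂ hc₂
  have : Nonempty (Set.Icc (0:ℝ) (1/2)) := ⟨⟨0, by norm_num, by norm_num⟩⟩
  have : Nonempty (Set.Icc (1/2:ℝ) 1) := ⟨⟨1, by norm_num, by norm_num⟩⟩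
  rw [hbound]
  refine max_le (ciSup_le fun x => ?_) (ciSup_le fun x => ?_)
  · exact (hu₁_le x x.2).trans (le_add_of_nonneg_right (by positivity))
  · linarith [hu₂_le x x.2]

end TwoIntervalProblem

theorem stmt_7_general (m : ℕ) (hm3 : ¬ (3 ∣ m))
    (lam : ℝ) (hlam : lam = 16 * π ^ 2 * (m : ℝ) ^ 2 / 9)
    (F₁ F₂ : ℝ → ℝ)
    (hF₁ : IntegrableOn F₁ (Set.Ioo 0 (1/2)))
    (hF₂ : IntegrableOn F₂ (Set.Ioo (1/2) 1))
    (c₂ : ℝ)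
    (hc₂ : c₂ = (1 / Real.sin (Real.sqrt lam / 2)) *
      ((∫ ξ in (0:ℝ)..(1/2), (Real.sin (Real.sqrt lam * (1/2 - ξ)) / Real.sqrt lam) * F₁ ξ) +
       ∫ ξ in (1/2:ℝ)..1, (Real.sin (Real.sqrt lam * (1/2 - ξ)) / Real.sqrt lam) * F₂ ξ))
    (u₁ u₂ : ℝ → ℝ)
    (hu₁ : ∀ x ∈ Set.Icc (0:ℝ) (1/2),
      u₁ x = ∫ ξ in (0:ℝ)..x, (Real.sin (Real.sqrt lam * (x - ξ)) / Real.sqrt lam) * F₁ ξ)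
    (hu₂ : ∀ x ∈ Set.Icc (1/2:ℝ) 1,
      u₂ x = c₂ * Real.sin (Real.sqrt lam * (1 - x)) -
        ∫ ξ in x..(1:ℝ), (Real.sin (Real.sqrt lam * (x - ξ)) / Real.sqrt lam) * F₂ ξ) :
    max (⨆ x : Set.Icc (0:ℝ) (1/2), |u₁ x|) (⨆ x : Set.Icc (1/2:ℝ) 1, |u₂ x|) ≤
      ((2 + Real.sqrt 3) / (Real.sqrt 3 * Real.sqrt lam)) *
        ((∫ ξ in (0:ℝ)..(1/2), |F₁ ξ|) + ∫ ξ in (1/2:ℝ)..1, |F₂ ξ|) := by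
  have hsqrt : √lam / 2 = 2 * π * ((m : ℤ) : ℝ) / 3 := by
    rw [hlam, show 16 * π ^ 2 * (m : ℝ) ^ 2 / 9 = (4 * π * m / 3) ^ 2 by ring,
      sqrt_sq (by positivity)]
    push_cast
    ring
  have hsin : |sin (√lam / 2)| = √3 / 2 := by
    rw [hsqrt]
    exact abs_sin_two_pi_mul_div_three (by exact_mod_cast hm3)
  have hconst : (2 + √3) / (√3 * √lam) = (1 + |sin (√lam / 2)|⁻¹) / √lam := by
    rw [hsin]
    field_simp
    ring
  rw [hconst]
  exact sup_abs_le_of_variation_of_constants (sqrt_nonneg lam)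
    ((intervalIntegrable_iff_integrableOn_Ioo_of_le (by norm_num)).mpr hF₁)
    ((intervalIntegrable_iff_integrableOn_Ioo_of_le (by norm_num)).mpr hF₂) hc₂ hu₁ hu₂

/-- a priori sup-norm estimate for one step of the FD-method
(`max` of the two sups is bounded iff both are bounded pointwise). -/
theorem stmt_7 (m : ℕ) (hm : 0 < m) (hm3 : ¬ (3 ∣ m))
    (lam : ℝ) (hlam : lam = 16 * π ^ 2 * (m : ℝ) ^ 2 / 9)
    (F₁ F₂ : ℝ → ℝ)
    (hF₁ : IntegrableOn F₁ (Set.Ioo 0 (1/2)))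
    (hF₂ : IntegrableOn F₂ (Set.Ioo (1/2) 1))
    (c₂ : ℝ)
    (hc₂ : c₂ = (1 / Real.sin (Real.sqrt lam / 2)) *
      ((∫ ξ in (0:ℝ)..(1/2), (Real.sin (Real.sqrt lam * (1/2 - ξ)) / Real.sqrt lam) * F₁ ξ) +
       ∫ ξ in (1/2:ℝ)..1, (Real.sin (Real.sqrt lam * (1/2 - ξ)) / Real.sqrt lam) * F₂ ξ))
    (u₁ u₂ : ℝ → ℝ)
    (hu₁ : ∀ x ∈ Set.Icc (0:ℝ) (1/2),
      u₁ x = ∫ ξ in (0:ℝ)..x, (Real.sin (Real.sqrt lam * (x - ξ)) / Real.sqrt lam) * F₁ ξ)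
    (hu₂ : ∀ x ∈ Set.Icc (1/2:ℝ) 1,
      u₂ x = c₂ * Real.sin (Real.sqrt lam * (1 - x)) -
        ∫ ξ in x..(1:ℝ), (Real.sin (Real.sqrt lam * (x - ξ)) / Real.sqrt lam) * F₂ ξ) :
    max (⨆ x : Set.Icc (0:ℝ) (1/2), |u₁ x|) (⨆ x : Set.Icc (1/2:ℝ) 1, |u₂ x|) ≤
      ((2 + Real.sqrt 3) / (Real.sqrt 3 * Real.sqrt lam)) *
        ((∫ ξ in (0:ℝ)..(1/2), |F₁ ξ|) + ∫ ξ in (1/2:ℝ)..1, |F₂ ξ|) :=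
  stmt_7_general m hm3 lam hlam F₁ F₂ hF₁ hF₂ c₂ hc₂ u₁ u₂ hu₁ hu₂
end

section
/- Let Q ≥ 0 and let (vⱼ)ⱼ≥0, (μⱼ)ⱼ≥1 be sequences of nonnegative real numbers, and (v̄ⱼ)ⱼ≥0, (μ̄ⱼ)ⱼ≥1 sequences of real numbers with v̄₀ = v₀ and, for all j ≥ 0: v_{j+1} ≤ Σ_{p=0}^{j} μ_{j+1−p}·v_p + Q·v_j and μ_{j+1} ≤ Σ_{p=1}^{j} μ_{j+1−p}·v_p + Q·v_j, while v̄_{j+1} = Σ_{p=0}^{j} μ̄_{j+1−p}·v̄_p + Q·v̄_j and μ̄_{j+1} = Σ_{p=1}^{j} μ̄_{j+1−p}·v̄_p + Q·v̄_j. Then for all j ≥ 0 one has vⱼ ≤ v̄ⱼ, and for all j ≥ 1 one has μⱼ ≤ μ̄ⱼ. -/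
/-- majorization lemma for the FD-method recursive inequalities. -/
theorem stmt_8 (Q : ℝ) (hQ : 0 ≤ Q) (v μ vb μb : ℕ → ℝ)
    (hv : ∀ j, 0 ≤ v j) (hμ : ∀ j, 1 ≤ j → 0 ≤ μ j)
    (h0 : vb 0 = v 0)
    (hvrec : ∀ j, v (j+1) ≤ (∑ p ∈ Finset.range (j+1), μ (j+1-p) * v p) + Q * v j)
    (hμrec : ∀ j, μ (j+1) ≤ (∑ p ∈ Finset.Icc 1 j, μ (j+1-p) * v p) + Q * v j)
    (hvbrec : ∀ j, vb (j+1) = (∑ p ∈ Finset.range (j+1), μb (j+1-p) * vb p) + Q * vb j)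
    (hμbrec : ∀ j, μb (j+1) = (∑ p ∈ Finset.Icc 1 j, μb (j+1-p) * vb p) + Q * vb j) :
    (∀ j, v j ≤ vb j) ∧ (∀ j, 1 ≤ j → μ j ≤ μb j) := by
  have key : ∀ n, (v n ≤ vb n) ∧ (1 ≤ n → μ n ≤ μb n) := by
    intro n
    induction n using Nat.strong_induction_on with
    | _ n ih =>
      match n with
      | 0 => exact ⟨h0.ge, by omega⟩
      | j + 1 =>
        have hvle : ∀ k, k ≤ j → v k ≤ vb k := fun k hk => (ih k (by omega)).1
        have hμle : ∀ k, 1 ≤ k → k ≤ j → μ k ≤ μb k :=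
          fun k h1 h2 => (ih k (by omega)).2 h1
        have hμj : μ (j+1) ≤ μb (j+1) := by
          rw [hμbrec]
          refine le_trans (hμrec j) (add_le_add (Finset.sum_le_sum ?_) ?_)
          · intro p hp
            simp only [Finset.mem_Icc] at hp
            have hi1 : 1 ≤ j + 1 - p := by omega
            have hi2 : j + 1 - p ≤ j := by omega
            exact mul_le_mul (hμle _ hi1 hi2) (hvle p hp.2) (hv p)
              (le_trans (hμ _ hi1) (hμle _ hi1 hi2))
          · exact mul_le_mul_of_nonneg_left (hvle j le_rfl) hQ
        refine ⟨?_, fun _ => hμj⟩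
        rw [hvbrec]
        refine le_trans (hvrec j) (add_le_add (Finset.sum_le_sum ?_) ?_)
        · intro p hp
          simp only [Finset.mem_range] at hp
          have hp' : p ≤ j := by omega
          have hi1 : 1 ≤ j + 1 - p := by omega
          have hμi : μ (j+1-p) ≤ μb (j+1-p) := by
            rcases Nat.lt_or_ge (j+1-p) (j+1) with h | h
            · exact hμle _ hi1 (by omega)
            · have : j + 1 - p = j + 1 := by omega
              rw [this]; exact hμj
          exact mul_le_mul hμi (hvle p hp') (hv p) (le_trans (hμ _ hi1) hμi)
        · exact mul_le_mul_of_nonneg_left (hvle j le_rfl) hQ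
  exact ⟨fun j => (key j).1, fun j hj => (key j).2 hj⟩
end

section
/- Let Q ≥ 0, v̄₀ ∈ ℝ, and let (v̄ⱼ)ⱼ≥0, (μ̄ⱼ)ⱼ≥1 satisfy, for all j ≥ 0, v̄_{j+1} = Σ_{p=0}^{j} μ̄_{j+1−p}·v̄_p + Q·v̄_j and μ̄_{j+1} = Σ_{p=1}^{j} μ̄_{j+1−p}·v̄_p + Q·v̄_j. Then for all j ≥ 0: (1 + v̄₀)·μ̄_{j+1} = v̄_{j+1}, and v̄_{j+1} = Σ_{p=1}^{j} v̄_{j+1−p}·v̄_p + Q·(1 + v̄₀)·v̄_j. -/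
/-- elimination of `μ̄` from the coupled majorant recursion. -/
theorem stmt_9 (Q : ℝ) (hQ : 0 ≤ Q) (vb μb : ℕ → ℝ)
    (hvbrec : ∀ j, vb (j+1) = (∑ p ∈ Finset.range (j+1), μb (j+1-p) * vb p) + Q * vb j)
    (hμbrec : ∀ j, μb (j+1) = (∑ p ∈ Finset.Icc 1 j, μb (j+1-p) * vb p) + Q * vb j) :
    (∀ j, (1 + vb 0) * μb (j+1) = vb (j+1)) ∧
    (∀ j, vb (j+1) = (∑ p ∈ Finset.Icc 1 j, vb (j+1-p) * vb p) + Q * (1 + vb 0) * vb j) := by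
  have hset : ∀ j : ℕ, Finset.range (j+1) = insert 0 (Finset.Icc 1 j) := by
    intro j; ext x; simp [Finset.mem_range, Finset.mem_Icc]; omega
  have hsplit : ∀ j : ℕ, vb (j+1) = μb (j+1) * vb 0
      + (∑ p ∈ Finset.Icc 1 j, μb (j+1-p) * vb p) + Q * vb j := by
    intro j
    have hv := hvbrec j
    rw [hset j, Finset.sum_insert (by simp)] at hv
    simpa [add_assoc] using hv
  have h1 : ∀ j, (1 + vb 0) * μb (j+1) = vb (j+1) := by
    intro j
    linear_combination hμbrec j - hsplit j
  refine ⟨h1, ?_⟩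
  intro j
  have hS : (1 + vb 0) * (∑ p ∈ Finset.Icc 1 j, μb (j+1-p) * vb p)
      = ∑ p ∈ Finset.Icc 1 j, vb (j+1-p) * vb p := by
    rw [Finset.mul_sum]
    refine Finset.sum_congr rfl ?_
    intro p hp
    obtain ⟨hp1, hp2⟩ := Finset.mem_Icc.mp hp
    have hjp : j + 1 - p = (j - p) + 1 := by omega
    rw [hjp]
    linear_combination vb p * h1 (j - p)
  linear_combination (1 + vb 0) * hsplit j + vb 0 * h1 j + hS
end

section
/- Let v̄₀ > 0 and Q > 0, and define the sequence (v̄ⱼ)ⱼ≥0 by the recursion v̄_{j+1} = Σ_{p=1}^{j} v̄_{j+1−p}·v̄_p + Q·(1 + v̄₀)·v̄_j for j ≥ 0. Set R = (1 + 2v̄₀ − 2√(v̄₀(1 + v̄₀)))/((1 + v̄₀)·Q). Then for every z ∈ [0, R] the series Σ_{j=0}^{∞} v̄ⱼ·zʲ converges, and its sum equals v̄₀ + (1/2)·[(1 − (1 + v̄₀)·Q·z) − √((1 − (1 + v̄₀)·Q·z)² − 4·v̄₀·(1 + v̄₀)·Q·z)]. -/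
/-!
With `u = (1 + v̄₀) Q z` the rescaled terms `aⱼ = v̄ⱼ zʲ` obey the same recursion with `Q (1 + v̄₀)`
replaced by `u`, so their tail sum `T = ∑_{j ≥ 1} aⱼ` formally solves `T = T² + u (v̄₀ + T)`, whose
smaller root `t` is the claimed sum minus `v̄₀`. For `z ≤ R` the discriminant of this quadratic is
nonnegative, and since `x ↦ x² + u (v̄₀ + x)` is monotone on `[0, ∞)`, the partial tail sums stay
below `t` by induction. Hence the series converges; by the Cauchy product its tail sum is a root of
the quadratic, and being at most `t` it is `t`.
-/

open Finset

def convTail (a : ℕ → ℝ) (j : ℕ) : ℝ := ∑ p ∈ Icc 1 j, a (j + 1 - p) * a p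

def ConvRecursion (u : ℝ) (a : ℕ → ℝ) : Prop := ∀ j, a (j + 1) = convTail a j + u * a j

@[simp]
lemma convTail_zero (a : ℕ → ℝ) : convTail a 0 = 0 := by simp [convTail]

lemma convTail_succ (a : ℕ → ℝ) (n : ℕ) :
    convTail a (n + 1) = ∑ ij ∈ antidiagonal n, a (ij.1 + 1) * a (ij.2 + 1) := by
  rw [Nat.sum_antidiagonal_eq_sum_range_succ (fun i j => a (i + 1) * a (j + 1)), convTail,
    ← Ico_add_one_right_eq_Icc, sum_Ico_eq_sum_range]
  refine sum_congr (by simp) fun k hk => ?_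
  rw [mem_range] at hk
  rw [show n + 1 + 1 - (1 + k) = n - k + 1 by omega, add_comm 1 k, mul_comm]

lemma convTail_mul_pow (a : ℕ → ℝ) (z : ℝ) (j : ℕ) :
    convTail (fun i => a i * z ^ i) j = convTail a j * z ^ (j + 1) := by
  rw [convTail, convTail, sum_mul]
  refine sum_congr rfl fun p hp => ?_
  have hpow : z ^ (j + 1 - p) * z ^ p = z ^ (j + 1) := by
    rw [← pow_add]
    congr 1
    rw [mem_Icc] at hp
    omega
  rw [← hpow]
  ring

lemma sum_range_sum_antidiagonal_le_sq {b : ℕ → ℝ} (hb : ∀ k, 0 ≤ b k) (n : ℕ) :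
    ∑ k ∈ range n, ∑ ij ∈ antidiagonal k, b ij.1 * b ij.2 ≤ (∑ k ∈ range n, b k) ^ 2 := by
  simp_rw [Nat.sum_antidiagonal_eq_sum_range_succ (fun i j => b i * b j)]
  rw [sum_comm' (t' := range n) (s' := fun i => Ico i n)
    (by intro k i; simp only [mem_range, mem_Ico]; omega), sq, sum_mul]
  refine sum_le_sum fun i _ => ?_
  rw [← mul_sum, sum_Ico_eq_sum_range]
  refine mul_le_mul_of_nonneg_left ?_ (hb i)
  simp only [Nat.add_sub_cancel_left]
  exact sum_le_sum_of_subset_of_nonneg (range_subset_range.2 (Nat.sub_le n i)) fun k _ _ => hb k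

-- The roots of `x² + (u - 1) x + u c` sum to `1 - u`, so `2 t ≤ 1 - u` makes `t` the smaller one.
lemma eq_of_quadratic_of_le {u c T t : ℝ} (hT : T = T ^ 2 + u * (c + T))
    (ht : t = t ^ 2 + u * (c + t)) (hTt : T ≤ t) (h2t : 2 * t ≤ 1 - u) : T = t := by
  nlinarith [mul_nonneg (sub_nonneg.2 hTt) (sub_nonneg.2 h2t)]

lemma le_one_of_le_sub_sqrt {c u : ℝ} (hc : 0 ≤ c) (h : u ≤ 1 + 2 * c - 2 * √(c * (1 + c))) :
    u ≤ 1 := by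
  have : c ≤ √(c * (1 + c)) := (Real.le_sqrt hc (by positivity)).2 (by nlinarith)
  linarith

lemma discrim_nonneg_of_le_sub_sqrt {c u : ℝ} (hc : 0 ≤ c)
    (h : u ≤ 1 + 2 * c - 2 * √(c * (1 + c))) : 0 ≤ (1 - u) ^ 2 - 4 * c * u := by
  have hσ : √(c * (1 + c)) ^ 2 = c * (1 + c) := Real.sq_sqrt (by positivity)
  have hσ0 := Real.sqrt_nonneg (c * (1 + c))
  -- the two roots in `u` of the discriminant are `1 + 2c ∓ 2√(c(1+c))`
  nlinarith [mul_nonneg (sub_nonneg.2 h)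
    (show 0 ≤ 1 + 2 * c + 2 * √(c * (1 + c)) - u by linarith)]

namespace ConvRecursion

variable {u : ℝ} {a : ℕ → ℝ}

lemma mul_pow (ha : ConvRecursion u a) (z : ℝ) :
    ConvRecursion (u * z) (fun i => a i * z ^ i) := fun j => by
  dsimp only
  rw [convTail_mul_pow, ha j]
  ring

lemma nonneg (ha : ConvRecursion u a) (hu : 0 ≤ u) (ha0 : 0 ≤ a 0) (j : ℕ) : 0 ≤ a j := by
  induction j using Nat.strong_induction_on with
  | _ j ih =>
    rcases j with _ | j
    · exact ha0
    · rw [ha j, convTail]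
      refine add_nonneg (sum_nonneg fun p hp => ?_) (mul_nonneg hu (ih j (by omega)))
      rw [mem_Icc] at hp
      exact mul_nonneg (ih _ (by omega)) (ih p (by omega))

lemma sum_range_succ_le {t : ℝ} (ha : ConvRecursion u a) (hu : 0 ≤ u) (hnn : ∀ j, 0 ≤ a j)
    (ht : 0 ≤ t) (hsuper : t ^ 2 + u * (a 0 + t) ≤ t) (n : ℕ) :
    ∑ k ∈ range n, a (k + 1) ≤ t := by
  induction n with
  | zero => simpa using ht
  | succ n ih =>
    set S := ∑ k ∈ range n, a (k + 1)
    have hS : 0 ≤ S := sum_nonneg fun k _ => hnn (k + 1)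
    have hstep : ∑ k ∈ range (n + 1), a (k + 1) ≤ S ^ 2 + u * (a 0 + S) :=
      calc ∑ k ∈ range (n + 1), a (k + 1)
          = ∑ k ∈ range n, ∑ ij ∈ antidiagonal k, a (ij.1 + 1) * a (ij.2 + 1)
              + u * (a 0 + S) := by
            rw [sum_congr rfl fun k _ => ha k, sum_add_distrib, ← mul_sum, sum_range_succ',
              sum_range_succ' a, convTail_zero]
            simp only [convTail_succ]
            ring
        _ ≤ S ^ 2 + u * (a 0 + S) := by
            gcongr
            exact sum_range_sum_antidiagonal_le_sq (fun k => hnn (k + 1)) n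
    nlinarith [mul_le_mul ih ih hS ht, mul_le_mul_of_nonneg_left ih hu]

lemma eq_of_hasSum_tail {T : ℝ} (ha : ConvRecursion u a) (hT : HasSum (fun k => a (k + 1)) T) :
    T = T ^ 2 + u * (a 0 + T) := by
  have hnorm : Summable fun k => ‖a (k + 1)‖ := summable_norm_iff.2 hT.summable
  have hconv : HasSum (convTail a) (T ^ 2) := by
    refine (hasSum_nat_add_iff' 1).1 ?_
    simp only [convTail_succ, sum_range_one, convTail_zero, sub_zero]
    rw [sq, ← hT.tsum_eq, tsum_mul_tsum_eq_tsum_sum_antidiagonal_of_summable_norm hnorm hnorm]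
    exact (summable_norm_sum_mul_antidiagonal_of_summable_norm hnorm hnorm).of_norm.hasSum
  have hshift : HasSum (fun k => a (k + 1)) (T ^ 2 + u * (a 0 + T)) := by
    simp only [ha _]
    exact hconv.add (hT.zero_add.mul_left u)
  exact hT.unique hshift

theorem hasSum (ha : ConvRecursion u a) (hu : 0 ≤ u) (hu1 : u ≤ 1) (ha0 : 0 ≤ a 0)
    (hD : 0 ≤ (1 - u) ^ 2 - 4 * a 0 * u) :
    HasSum a (a 0 + ((1 - u) - √((1 - u) ^ 2 - 4 * a 0 * u)) / 2) := by
  set s := √((1 - u) ^ 2 - 4 * a 0 * u)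
  set t := ((1 - u) - s) / 2 with ht
  have hs : s ^ 2 = (1 - u) ^ 2 - 4 * a 0 * u := Real.sq_sqrt hD
  have hs1 : s ≤ 1 - u :=
    Real.sqrt_le_iff.2 ⟨by linarith, by nlinarith [mul_nonneg ha0 hu]⟩
  have hs0 : 0 ≤ s := Real.sqrt_nonneg _
  have ht0 : 0 ≤ t := by linarith [ht]
  have h2t : 2 * t ≤ 1 - u := by linarith [ht]
  have hroot : t = t ^ 2 + u * (a 0 + t) := by rw [ht]; linear_combination -hs / 4
  have hnn := ha.nonneg hu ha0
  have hbound := ha.sum_range_succ_le hu hnn ht0 hroot.ge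
  have hT := (summable_of_sum_range_le (fun k => hnn (k + 1)) hbound).hasSum
  have hTt : ∑' k, a (k + 1) = t := eq_of_quadratic_of_le (ha.eq_of_hasSum_tail hT) hroot
    (Real.tsum_le_of_sum_range_le (fun k => hnn (k + 1)) hbound) h2t
  rw [hTt] at hT
  exact hT.zero_add

end ConvRecursion

/-- generating function of the majorant sequence of the FD-method:
convergence on `[0, R]` and the explicit closed form of the sum. -/
theorem stmt_10 (v0 Q : ℝ) (hv0 : 0 < v0) (hQ : 0 < Q) (vb : ℕ → ℝ)
    (h0 : vb 0 = v0)
    (hrec : ∀ j, vb (j+1) = (∑ p ∈ Finset.Icc 1 j, vb (j+1-p) * vb p) + Q * (1 + v0) * vb j)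
    (R : ℝ)
    (hR : R = (1 + 2*v0 - 2*Real.sqrt (v0*(1+v0))) / ((1+v0)*Q)) :
    ∀ z ∈ Set.Icc (0:ℝ) R,
      HasSum (fun j => vb j * z ^ j)
        (v0 + (1/2) * ((1 - (1+v0)*Q*z) -
          Real.sqrt ((1 - (1+v0)*Q*z)^2 - 4*v0*(1+v0)*Q*z))) := by
  rintro z ⟨hz0, hzR⟩
  have hu : (1 + v0) * Q * z ≤ 1 + 2 * v0 - 2 * √(v0 * (1 + v0)) := by
    rw [hR, le_div_iff₀ (by positivity)] at hzR
    linarith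
  have hrescaled : ConvRecursion ((1 + v0) * Q * z) (fun j => vb j * z ^ j) := by
    rw [mul_comm (1 + v0)]
    exact ConvRecursion.mul_pow hrec z
  have ha0 : vb 0 * z ^ 0 = v0 := by rw [h0, pow_zero, mul_one]
  have hsum := hrescaled.hasSum (by positivity) (le_one_of_le_sub_sqrt hv0.le hu)
    (by rw [ha0]; exact hv0.le) (by rw [ha0]; exact discrim_nonneg_of_le_sub_sqrt hv0.le hu)
  rw [ha0] at hsum
  convert hsum using 2
  ring_nf
end

section
/- Let a, b, Q > 0 and let (Uⱼ)ⱼ≥0 and (Aⱼ)ⱼ≥1 be sequences of nonnegative real numbers satisfying, for all j ≥ 0: U_{j+1} ≤ (1/a)·[Σ_{p=0}^{j} A_{j+1−p}·U_p + Q·U_j] and A_{j+1} ≤ (1/b)·[Σ_{p=1}^{j} A_{j+1−p}·U_p + Q·U_j]. Set v₀ = U₀/b and R = 1/((1 + v₀)·Q·(1 + 2v₀ + 2√(v₀(1 + v₀)))). If a·R > 1, then there exists a constant C > 0 such that for all j ≥ 1: Uⱼ ≤ C·(a·R)^{−j} and Aⱼ ≤ C·(a·R)^{−j}; in particular the series Σⱼ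 Aⱼ and Σⱼ Uⱼ converge, with Σ_{j>m} Aⱼ ≤ C·(a·R)^{−m}/(a·R − 1) for every m ≥ 0. -/
/-!
Weight the corrections by powers of `z = a·R`: with `uₚ = Uₚ zᵖ` and `αᵢ = Aᵢ zⁱ` the recursions
keep their convolution form, with `Q` replaced by `Q z`. Since the convolution of two nonnegative
sequences is dominated by the product of their partial sums, the pair of bounds
`∑_{p ≤ N} uₚ ≤ S`, `∑_{1 ≤ i ≤ N} αᵢ ≤ T` propagates from `N` to `N + 1` as soon as
`T (S - U₀) + Q z S ≤ b T` and `T S + Q z S ≤ a (S - U₀)`. Taking `T` to make the first condition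
an equality, the second asks `Q R S (b + U₀) ≤ (S - U₀)(b + U₀ - S)`; the choice
`S = b √(v₀(1 + v₀))` maximises the right side relative to `S`, and `R` is exactly the value
for which it holds with equality. Hence `Uⱼ, Aⱼ ≤ C z⁻ʲ`, and the tail bound is a geometric sum.
-/

open Finset

lemma sum_Icc_sub_le_sum_Icc {f : ℕ → ℝ} (hf : ∀ i, 1 ≤ i → 0 ≤ f i) {lo p N : ℕ}
    (hp : lo ≤ p) :
    ∑ j ∈ Icc p N, f (j + 1 - p) ≤ ∑ i ∈ Icc 1 (N + 1 - lo), f i := by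
  calc ∑ j ∈ Icc p N, f (j + 1 - p) = ∑ i ∈ (Icc p N).image (· + 1 - p), f i :=
        (sum_image fun x hx y hy h => by simp only [coe_Icc, Set.mem_Icc] at hx hy; omega).symm
    _ ≤ ∑ i ∈ Icc 1 (N + 1 - lo), f i :=
        sum_le_sum_of_subset_of_nonneg
          (fun i hi => by simp only [mem_image, mem_Icc] at hi ⊢; omega)
          fun i hi _ => hf i (mem_Icc.1 hi).1

lemma sum_conv_le_mul_sum {f g : ℕ → ℝ} (hf : ∀ i, 1 ≤ i → 0 ≤ f i) (hg : ∀ p, 0 ≤ g p)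
    (N lo : ℕ) :
    ∑ j ∈ range (N + 1), ∑ p ∈ Icc lo j, f (j + 1 - p) * g p
      ≤ (∑ i ∈ Icc 1 (N + 1 - lo), f i) * ∑ p ∈ Icc lo N, g p := by
  rw [sum_comm' (t' := Icc lo N) (s' := fun p => Icc p N)
    (fun j p => by simp only [mem_range, mem_Icc]; omega), mul_sum]
  refine sum_le_sum fun p hp => ?_
  rw [← sum_mul]
  exact mul_le_mul_of_nonneg_right (sum_Icc_sub_le_sum_Icc hf (mem_Icc.1 hp).1) (hg p)

lemma sum_Icc_one_eq_sum_range (f : ℕ → ℝ) (n : ℕ) :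
    ∑ i ∈ Icc 1 n, f i = ∑ j ∈ range n, f (j + 1) := by
  rw [← Ico_add_one_right_eq_Icc, sum_Ico_eq_sum_range, add_tsub_cancel_right]
  simp only [add_comm]

lemma sum_mul_pow_eq_sum_weighted (A U : ℕ → ℝ) (z : ℝ) {n : ℕ} {s : Finset ℕ}
    (hs : ∀ p ∈ s, p ≤ n) :
    (∑ p ∈ s, A (n - p) * U p) * z ^ n = ∑ p ∈ s, A (n - p) * z ^ (n - p) * (U p * z ^ p) := by
  rw [sum_mul]
  refine sum_congr rfl fun p hp => ?_
  rw [← pow_sub_mul_pow z (hs p hp)]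
  ring

lemma mul_weighted_le_of_le_conv {a z Q X : ℝ} {A U : ℕ → ℝ} {j : ℕ} {s : Finset ℕ}
    (ha : 0 < a) (hz : 0 ≤ z) (hs : ∀ p ∈ s, p ≤ j + 1)
    (h : X ≤ 1 / a * (∑ p ∈ s, A (j + 1 - p) * U p + Q * U j)) :
    a * (X * z ^ (j + 1))
      ≤ ∑ p ∈ s, A (j + 1 - p) * z ^ (j + 1 - p) * (U p * z ^ p) + Q * z * (U j * z ^ j) := by
  have haX : a * X ≤ ∑ p ∈ s, A (j + 1 - p) * U p + Q * U j := by
    rwa [one_div, ← div_eq_inv_mul, le_div_iff₀' ha] at h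
  calc a * (X * z ^ (j + 1)) = a * X * z ^ (j + 1) := by ring
    _ ≤ (∑ p ∈ s, A (j + 1 - p) * U p + Q * U j) * z ^ (j + 1) :=
        mul_le_mul_of_nonneg_right haX (pow_nonneg hz _)
    _ = _ := by rw [add_mul, sum_mul_pow_eq_sum_weighted A U z hs]; ring

lemma partial_sums_le_of_conv_rec {a b c S T : ℝ} {u α : ℕ → ℝ} (ha : 0 < a) (hb : 0 < b)
    (hc : 0 ≤ c) (hu : ∀ p, 0 ≤ u p) (hα : ∀ i, 1 ≤ i → 0 ≤ α i)
    (hu_rec : ∀ j, a * u (j + 1) ≤ ∑ p ∈ range (j + 1), α (j + 1 - p) * u p + c * u j)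
    (hα_rec : ∀ j, b * α (j + 1) ≤ ∑ p ∈ Icc 1 j, α (j + 1 - p) * u p + c * u j)
    (hS : u 0 ≤ S) (hT : 0 ≤ T) (hTb : T * (S - u 0) + c * S ≤ b * T)
    (hSa : T * S + c * S ≤ a * (S - u 0)) (N : ℕ) :
    ∑ p ∈ range (N + 1), u p ≤ S ∧ ∑ i ∈ Icc 1 N, α i ≤ T := by
  induction N with
  | zero => simpa using ⟨hS, hT⟩
  | succ N ih =>
    obtain ⟨hsum_u, hsum_α⟩ := ih
    have hsum_u' : ∑ p ∈ Icc 1 N, u p ≤ S - u 0 := by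
      rw [sum_Icc_one_eq_sum_range]
      rw [sum_range_succ'] at hsum_u
      linarith
    have hsum_α' : ∑ i ∈ Icc 1 (N + 1), α i ≤ T := by
      refine le_of_mul_le_mul_left ?_ hb
      calc b * ∑ i ∈ Icc 1 (N + 1), α i = ∑ j ∈ range (N + 1), b * α (j + 1) := by
            rw [sum_Icc_one_eq_sum_range, mul_sum]
        _ ≤ ∑ j ∈ range (N + 1), ∑ p ∈ Icc 1 j, α (j + 1 - p) * u p
              + c * ∑ j ∈ range (N + 1), u j := by
            rw [mul_sum, ← sum_add_distrib]; exact sum_le_sum fun j _ => hα_rec j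
        _ ≤ (∑ i ∈ Icc 1 N, α i) * (∑ p ∈ Icc 1 N, u p) + c * S := by
            gcongr
            exact sum_conv_le_mul_sum hα hu N 1
        _ ≤ T * (S - u 0) + c * S := by
            gcongr
            · exact sum_nonneg fun p _ => hu p
        _ ≤ b * T := hTb
    refine ⟨?_, hsum_α'⟩
    refine le_of_mul_le_mul_left ?_ ha
    calc a * ∑ p ∈ range (N + 1 + 1), u p
          = a * u 0 + ∑ j ∈ range (N + 1), a * u (j + 1) := by
            rw [sum_range_succ', mul_add, mul_sum]; ring
      _ ≤ a * u 0 + (∑ j ∈ range (N + 1), ∑ p ∈ Icc 0 j, α (j + 1 - p) * u p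
            + c * ∑ j ∈ range (N + 1), u j) := by
          simp only [← Nat.range_succ_eq_Icc_zero]
          rw [mul_sum, ← sum_add_distrib]
          gcongr with j
          exact hu_rec j
      _ ≤ a * u 0 + ((∑ i ∈ Icc 1 (N + 1), α i) * (∑ p ∈ range (N + 1), u p) + c * S) := by
          gcongr
          simpa only [Nat.range_succ_eq_Icc_zero, Nat.sub_zero] using sum_conv_le_mul_sum hα hu N 0
      _ ≤ a * u 0 + (T * S + c * S) := by
          gcongr
          · exact sum_nonneg fun p _ => hu p
      _ ≤ a * S := by linarith

lemma mul_pow_le_of_conv_rec {a b Q z S T : ℝ} {U A : ℕ → ℝ} (ha : 0 < a) (hb : 0 < b)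
    (hQ : 0 ≤ Q) (hz : 0 ≤ z) (hU : ∀ j, 0 ≤ U j) (hA : ∀ j, 1 ≤ j → 0 ≤ A j)
    (hUrec : ∀ j, U (j + 1) ≤ 1 / a * (∑ p ∈ range (j + 1), A (j + 1 - p) * U p + Q * U j))
    (hArec : ∀ j, A (j + 1) ≤ 1 / b * (∑ p ∈ Icc 1 j, A (j + 1 - p) * U p + Q * U j))
    (hS : U 0 ≤ S) (hT : 0 ≤ T) (hTb : T * (S - U 0) + Q * z * S ≤ b * T)
    (hSa : T * S + Q * z * S ≤ a * (S - U 0)) (j : ℕ) :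
    U j * z ^ j ≤ S ∧ (1 ≤ j → A j * z ^ j ≤ T) := by
  have hsums := partial_sums_le_of_conv_rec (u := fun p => U p * z ^ p)
    (α := fun i => A i * z ^ i) (c := Q * z) ha hb (by positivity)
    (fun p => mul_nonneg (hU p) (pow_nonneg hz p))
    (fun i hi => mul_nonneg (hA i hi) (pow_nonneg hz i))
    (fun j => mul_weighted_le_of_le_conv ha hz (fun p hp => (mem_range.1 hp).le) (hUrec j))
    (fun j => mul_weighted_le_of_le_conv hb hz (fun p hp => (mem_Icc.1 hp).2.trans j.le_succ)
      (hArec j))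
    (by simpa using hS) hT (by simpa using hTb) (by simpa using hSa) j
  exact ⟨(single_le_sum (f := fun p => U p * z ^ p)
      (fun p _ => mul_nonneg (hU p) (pow_nonneg hz p)) (self_mem_range_succ j)).trans hsums.1,
    fun hj => (single_le_sum (f := fun i => A i * z ^ i)
      (fun i hi => mul_nonneg (hA i (mem_Icc.1 hi).1) (pow_nonneg hz i))
      (mem_Icc.2 ⟨hj, le_rfl⟩)).trans hsums.2⟩

lemma sqrt_mul_one_add_bounds {v : ℝ} (hv : 0 ≤ v) :
    v ≤ √(v * (1 + v)) ∧ √(v * (1 + v)) < 1 + v := by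
  have hsq := Real.sq_sqrt (by positivity : 0 ≤ v * (1 + v))
  have hnn := Real.sqrt_nonneg (v * (1 + v))
  constructor <;> nlinarith

lemma radius_balance {Q v R : ℝ} (hQ : 0 < Q) (hv : 0 ≤ v)
    (hR : R = 1 / ((1 + v) * Q * (1 + 2 * v + 2 * √(v * (1 + v))))) :
    Q * R * √(v * (1 + v)) * (1 + v) = (√(v * (1 + v)) - v) * (1 + v - √(v * (1 + v))) := by
  have hsq := Real.sq_sqrt (by positivity : 0 ≤ v * (1 + v))
  rw [hR]
  field_simp
  linear_combination (2 * √(v * (1 + v)) - 2 * v - 1) * hsq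

lemma summable_succ_and_tsum_tail_le_of_le_div_pow {f : ℕ → ℝ} {C z : ℝ} (hz : 1 < z)
    (hf0 : ∀ j, 0 ≤ f (j + 1)) (hf : ∀ j, f (j + 1) ≤ C / z ^ (j + 1)) :
    Summable (fun j => f (j + 1)) ∧ ∀ m, ∑' j, f (j + m + 1) ≤ C / z ^ m / (z - 1) := by
  have hz0 : 0 < z := one_pos.trans hz
  have hgeom : ∀ m, HasSum (fun j => C / z ^ (j + m + 1)) (C / z ^ m / (z - 1)) := by
    intro m
    have hterm : (fun j => C / z ^ (j + m + 1)) = fun j => C / z ^ (m + 1) * z⁻¹ ^ j := by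
      funext j
      rw [inv_pow, ← div_eq_mul_inv, div_div, ← pow_add]; ring_nf
    have hvalue : C / z ^ m / (z - 1) = C / z ^ (m + 1) * (1 - z⁻¹)⁻¹ := by
      have : z - 1 ≠ 0 := (sub_pos.2 hz).ne'
      field_simp
      ring
    rw [hterm, hvalue]
    exact (hasSum_geometric_of_lt_one (inv_nonneg.2 hz0.le) (inv_lt_one_of_one_lt₀ hz)).mul_left _
  have hsum : Summable (fun j => f (j + 1)) :=
    Summable.of_nonneg_of_le hf0 hf (by simpa using (hgeom 0).summable)
  refine ⟨hsum, fun m => ?_⟩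
  have hsum_tail : Summable (fun j => f (j + m + 1)) := (summable_nat_add_iff m).2 hsum
  exact (hsum_tail.tsum_le_tsum (fun j => hf (j + m)) (hgeom m).summable).trans_eq
    (hgeom m).tsum_eq

/-- abstract core of the FD-method convergence theorem:
geometric decay of the corrections under the condition `a·R > 1`. -/
theorem stmt_12 (a b Q : ℝ) (ha : 0 < a) (hb : 0 < b) (hQ : 0 < Q)
    (U A : ℕ → ℝ) (hU : ∀ j, 0 ≤ U j) (hA : ∀ j, 1 ≤ j → 0 ≤ A j)
    (hUrec : ∀ j, U (j+1) ≤ (1/a) * ((∑ p ∈ Finset.range (j+1), A (j+1-p) * U p) + Q * U j))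
    (hArec : ∀ j, A (j+1) ≤ (1/b) * ((∑ p ∈ Finset.Icc 1 j, A (j+1-p) * U p) + Q * U j))
    (v0 R : ℝ) (hv0 : v0 = U 0 / b)
    (hR : R = 1 / ((1+v0)*Q*(1 + 2*v0 + 2*Real.sqrt (v0*(1+v0)))))
    (hconv : 1 < a * R) :
    ∃ C > 0, (∀ j, 1 ≤ j → U j ≤ C / (a*R)^j ∧ A j ≤ C / (a*R)^j) ∧
      Summable (fun j => A (j+1)) ∧ Summable U ∧
      ∀ m : ℕ, (∑' j : ℕ, A (j + m + 1)) ≤ C / (a*R)^m / (a*R - 1) := by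
  set z := a * R
  have hz : 0 < z := one_pos.trans hconv
  have hv0_nonneg : 0 ≤ v0 := hv0 ▸ div_nonneg (hU 0) hb.le
  have hU0 : U 0 = b * v0 := by rw [hv0]; field_simp
  have hbal := radius_balance hQ hv0_nonneg hR
  set s := √(v0 * (1 + v0))
  obtain ⟨hv0s, hs1⟩ := sqrt_mul_one_add_bounds hv0_nonneg
  set T := Q * z * s / (1 + v0 - s)
  have hTd : T * (1 + v0 - s) = Q * z * s := div_mul_cancel₀ _ (by linarith)
  have hbound := mul_pow_le_of_conv_rec (S := b * s) (T := T) ha hb hQ.le hz.le hU hA hUrec hArec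
    (by rw [hU0]; gcongr) (div_nonneg (by positivity) (by linarith))
    (by rw [hU0]; linear_combination (-b) * hTd)
    (by
      rw [hU0]
      refine le_of_eq (mul_right_cancel₀ (sub_pos.2 hs1).ne' ?_)
      linear_combination (b * s) * hTd + (b * a) * hbal)
  set C := max (max (b * s) T) 1
  have hC : ∀ j, 1 ≤ j → U j ≤ C / z ^ j ∧ A j ≤ C / z ^ j := fun j hj => by
    simp only [le_div_iff₀ (pow_pos hz j)]
    exact ⟨(hbound j).1.trans (by simp [C]), ((hbound j).2 hj).trans (by simp [C])⟩
  obtain ⟨hsumA, htail⟩ := summable_succ_and_tsum_tail_le_of_le_div_pow hconv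
    (fun j => hA (j + 1) (by omega)) (fun j => (hC (j + 1) (by omega)).2)
  obtain ⟨hsumU, -⟩ := summable_succ_and_tsum_tail_le_of_le_div_pow hconv (fun j => hU (j + 1))
    (fun j => (hC (j + 1) (by omega)).1)
  exact ⟨C, by positivity, hC, hsumA, (summable_nat_add_iff 1).1 hsumU, htail⟩
end

section
/- Let v₀ > 0, Q ≥ 0, K ≥ 0, R > 0, and let N̄ : ℝ → ℝ satisfy N̄(y) ≥ 0 for all y ≥ v₀. Suppose f : (0, R) → ℝ satisfies f(z) ≥ v₀ for all z ∈ (0, R) and the identity f(z) − v₀ = (f(z) − v₀)² + (1 + v₀)·z·(Q·f(z) + N̄(f(z)) + K) for all z ∈ (0, R). Then f(z) does not tend to +∞ as z → R from the left. -/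
/-!
Write `w = f z - v₀ ≥ 0`. The identity says that `w - w²` equals a product of nonnegative
factors, so `w² ≤ w` and hence `w ≤ 1`: `f` is bounded by `v₀ + 1` on all of `(0, R)`, and a
function bounded on a left neighbourhood of `R` cannot tend to `+∞` there.
-/

open Filter Set Topology

theorem le_one_of_sq_le_self {α : Type*} [Ring α] [LinearOrder α] [IsStrictOrderedRing α]
    {w : α} (h : w ^ 2 ≤ w) : w ≤ 1 := by
  by_contra! hw
  have : w * 1 < w * w := mul_lt_mul_of_pos_left hw (zero_lt_one.trans hw)
  rw [mul_one, ← sq] at this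
  exact h.not_gt this

theorem le_add_one_of_sub_eq_sq_add {α : Type*} [Ring α] [LinearOrder α] [IsStrictOrderedRing α]
    {v y c : α} (hc : 0 ≤ c) (h : y - v = (y - v) ^ 2 + c) : y ≤ v + 1 := by
  have := le_one_of_sq_le_self (w := y - v) ((le_add_of_nonneg_right hc).trans_eq h.symm)
  rwa [sub_le_iff_le_add'] at this

/-- the generating function of the nonlinear FD-method majorant
sequence cannot blow up at the right endpoint of its interval of convergence. -/
theorem stmt_15 (v0 Q K R : ℝ) (hv0 : 0 < v0) (hQ : 0 ≤ Q) (hK : 0 ≤ K) (hR : 0 < R)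
    (Nb : ℝ → ℝ) (hNb : ∀ y, v0 ≤ y → 0 ≤ Nb y)
    (f : ℝ → ℝ) (hf : ∀ z ∈ Set.Ioo (0:ℝ) R, v0 ≤ f z)
    (hid : ∀ z ∈ Set.Ioo (0:ℝ) R,
      f z - v0 = (f z - v0)^2 + (1 + v0) * z * (Q * f z + Nb (f z) + K)) :
    ¬ Filter.Tendsto f (nhdsWithin R (Set.Iio R)) Filter.atTop := by
  have hbound : ∀ z ∈ Ioo 0 R, f z ≤ v0 + 1 := fun z hz => by
    have hQf : 0 ≤ Q * f z := mul_nonneg hQ (hv0.le.trans (hf z hz))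
    have hterm : 0 ≤ (1 + v0) * z * (Q * f z + Nb (f z) + K) :=
      mul_nonneg (mul_nonneg (by linarith) hz.1.le)
        (add_nonneg (add_nonneg hQf (hNb _ (hf z hz))) hK)
    exact le_add_one_of_sub_eq_sq_add hterm (hid z hz)
  have hbdd : IsBoundedUnder (· ≤ ·) (𝓝[<] R) f :=
    isBoundedUnder_of_eventually_le (eventually_of_mem (Ioo_mem_nhdsLT hR) hbound)
  exact fun htend => not_isBoundedUnder_of_tendsto_atTop htend hbdd
end

section
/- Let q : ℝ → ℝ be integrable on (0,1) with Q = ∫₀¹|q(x)| dx, let n be a positive even integer, and set λ⁽⁰⁾ = 4π²n², u₁⁽⁰⁾(x) = sin(2πn·x)/(2πn), u₂⁽⁰⁾(x) = sin(2πn·x)/(πn). Define recursively, for j ≥ 0: λ⁽ʲ⁺¹⁾ = (8πn/3)·[∫₀^{1/2}(−Σ_{p=1}^{j} λ⁽ʲ⁺¹⁻ᵖ⁾u₁⁽ᵖ⁾(x) + q(x)u₁⁽ʲ⁾(x))·sin(2πn·x) dx + ∫_{1/2}^{1}(−Σ_{p=1}^{j} λ⁽ʲ⁺¹⁻ᵖ⁾u₂⁽ᵖ⁾(x)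 + q(x)u₂⁽ʲ⁾(x))·sin(2πn·x) dx]; Fᵢ⁽ʲ⁺¹⁾(x) = −Σ_{p=0}^{j} λ⁽ʲ⁺¹⁻ᵖ⁾uᵢ⁽ᵖ⁾(x) + q(x)uᵢ⁽ʲ⁾(x) for i = 1,2; c₂⁽ʲ⁺¹⁾ = −∫₀^{1/2}(cos(2πn·x)/(2πn))·F₁⁽ʲ⁺¹⁾(x) dx − ∫_{1/2}^{1}(cos(2πn·x)/(2πn))·F₂⁽ʲ⁺¹⁾(x) dx; u₁⁽ʲ⁺¹⁾(x) = ∫₀^{x}(sin(2πn(x−ξ))/(2πn))·F₁⁽ʲ⁺¹⁾(ξ) dξ for x ∈ [0,1/2]; and u₂⁽ʲ⁺¹⁾(x) = c₂⁽ʲ⁺¹⁾·sin(2πn(1−x)) − ∫_{x}^{1}(sin(2πn(x−ξ))/(2πn))·F₂⁽ʲ⁺¹⁾(ξ) dξ for x ∈ [1/2,1]. If r := (11/3)·Q·(1 + 16/3 + 2√(88/9))/(πn) < 1, then there exists C > 0 such that for all j ≥ 1: |λ⁽ʲ⁾| ≤ C·rʲ and max(sup_{x∈[0,1/2]}|u₁⁽ʲ⁾(x)|,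 sup_{x∈[1/2,1]}|u₂⁽ʲ⁾(x)|) ≤ C·rʲ; in particular the series Σⱼ λ⁽ʲ⁾ converges absolutely and the series Σⱼ uᵢ⁽ʲ⁾ converge uniformly, with tails bounded by C·r^{m'+1}/(1−r) after the m'-th term. -/
/-!
The corrections obey the majorants `|λ⁽ʲ⁾| ≤ πn·rʲ/(15j²)`, `|u₁⁽ʲ⁾| ≤ rʲ/(60πn·j²)` on `[0,1/2]`
and `|u₂⁽ʲ⁾| ≤ rʲ/(15πn·j²)` on `[1/2,1]`, proved by strong induction on `j`. Each new iterate is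
an integral, against kernels of size at most `1/(2πn)`, of `λ⁽ʲ⁺¹⁾uᵢ⁽⁰⁾`, of the convolution
`∑ λ⁽ʲ⁺¹⁻ᵖ⁾uᵢ⁽ᵖ⁾` and of `q·uᵢ⁽ʲ⁾`. The weight `1/j²` survives the convolution, since
`∑_{p=1}^{k} 1/((k+1-p)²p²) ≤ 6/(k+1)²`, and the definition of `r` gives `∫₀¹|q| ≤ πn·r/40`, which
makes the `q`-terms small enough to close the induction. Dropping the factor `1/j²` gives the
geometric bounds, and `r < 1` turns them into convergence with geometric tails.
-/

open Real MeasureTheory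

theorem sum_Icc_one_div_le (k : ℕ) : ∑ p ∈ Finset.Icc 1 k, (1 : ℝ) / p ≤ (k + 1) / 2 := by
  induction k with
  | zero => simp
  | succ k ih =>
    rw [Finset.sum_Icc_succ_top (by omega), Nat.cast_succ]
    rcases Nat.eq_zero_or_pos k with rfl | hk
    · norm_num
    · have hk : (2 : ℝ) ≤ k + 1 := by have : (1 : ℝ) ≤ k := Nat.one_le_cast.2 hk; linarith
      have : (1 : ℝ) / (k + 1) ≤ 1 / 2 := one_div_le_one_div_of_le two_pos hk
      linarith

theorem sum_Icc_one_div_sq_le (k : ℕ) : ∑ p ∈ Finset.Icc 1 k, (1 : ℝ) / p ^ 2 ≤ 2 := by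
  have hIoo : Finset.Ioo 0 (k + 1) = Finset.Icc 1 k := by ext; simp; omega
  simpa [hIoo, one_div] using sum_Ioo_inv_sq_le (α := ℝ) 0 (k + 1)

theorem sum_Icc_one_reflect {M : Type*} [AddCommMonoid M] (f : ℕ → M) (k : ℕ) :
    ∑ p ∈ Finset.Icc 1 k, f (k + 1 - p) = ∑ p ∈ Finset.Icc 1 k, f p :=
  Finset.sum_nbij' (fun p => k + 1 - p) (fun p => k + 1 - p)
    (fun p hp => by simp only [Finset.mem_Icc] at *; omega)
    (fun p hp => by simp only [Finset.mem_Icc] at *; omega)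
    (fun p hp => by simp only [Finset.mem_Icc] at *; omega)
    (fun p hp => by simp only [Finset.mem_Icc] at *; omega)
    (fun p hp => rfl)

theorem sum_Icc_one_div_sq_mul_sq_le (k : ℕ) :
    ∑ p ∈ Finset.Icc 1 k, (1 : ℝ) / (((k + 1 - p : ℕ) : ℝ) ^ 2 * (p : ℝ) ^ 2)
      ≤ 6 / ((k : ℝ) + 1) ^ 2 := by
  -- with `m = k + 1`: `1 / ((m - p) p) = (1 / (m - p) + 1 / p) / m`, then square
  have hterm : ∀ p ∈ Finset.Icc 1 k, (1 : ℝ) / (((k + 1 - p : ℕ) : ℝ) ^ 2 * (p : ℝ) ^ 2)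
      = 1 / ((k : ℝ) + 1) ^ 2 * (1 / ((k + 1 - p : ℕ) : ℝ) ^ 2 + 1 / (p : ℝ) ^ 2)
        + 2 / ((k : ℝ) + 1) ^ 3 * (1 / ((k + 1 - p : ℕ) : ℝ) + 1 / (p : ℝ)) := by
    intro p hp
    rw [Finset.mem_Icc] at hp
    have hsum : ((k + 1 - p : ℕ) : ℝ) + p = k + 1 := by
      rw [← Nat.cast_add, Nat.sub_add_cancel (by omega)]; push_cast; ring
    have ha : (0 : ℝ) < ((k + 1 - p : ℕ) : ℝ) := by exact_mod_cast (by omega : 0 < k + 1 - p)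
    have hp : (0 : ℝ) < p := by exact_mod_cast hp.1
    rw [← hsum]
    field_simp
    ring
  rw [Finset.sum_congr rfl hterm, Finset.sum_add_distrib, ← Finset.mul_sum, ← Finset.mul_sum,
    Finset.sum_add_distrib, Finset.sum_add_distrib,
    sum_Icc_one_reflect (fun p => 1 / (p : ℝ) ^ 2), sum_Icc_one_reflect (fun p => 1 / (p : ℝ))]
  have hsq := sum_Icc_one_div_sq_le k
  have hharm := sum_Icc_one_div_le k
  calc _ ≤ 1 / ((k : ℝ) + 1) ^ 2 * (2 + 2) +
        2 / ((k : ℝ) + 1) ^ 3 * ((k + 1) / 2 + (k + 1) / 2) := by gcongr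
    _ = 6 / ((k : ℝ) + 1) ^ 2 := by field_simp; ring

theorem pow_succ_div_sq_le {r : ℝ} (hr : 0 ≤ r) {k : ℕ} (hk : 1 ≤ k) :
    r * (r ^ k / (k : ℝ) ^ 2) ≤ 4 * (r ^ (k + 1) / ((k : ℝ) + 1) ^ 2) := by
  have hk : (1 : ℝ) ≤ k := Nat.one_le_cast.2 hk
  have hsq : ((k : ℝ) + 1) ^ 2 ≤ 4 * (k : ℝ) ^ 2 := by nlinarith
  rw [show r * (r ^ k / (k : ℝ) ^ 2) = r ^ (k + 1) / (k : ℝ) ^ 2 by ring, mul_div_assoc',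
    div_le_div_iff₀ (by positivity) (by positivity)]
  nlinarith [mul_le_mul_of_nonneg_left hsq (pow_nonneg hr (k + 1))]

theorem abs_sum_Icc_convolution_le {a b : ℕ → ℝ} {k : ℕ} {α β r : ℝ} (hα : 0 ≤ α) (hβ : 0 ≤ β)
    (hr : 0 ≤ r) (ha : ∀ p ∈ Finset.Icc 1 k, |a p| ≤ α * (r ^ p / (p : ℝ) ^ 2))
    (hb : ∀ p ∈ Finset.Icc 1 k, |b p| ≤ β * (r ^ p / (p : ℝ) ^ 2)) :
    |∑ p ∈ Finset.Icc 1 k, a (k + 1 - p) * b p| ≤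
      6 * (α * β) * (r ^ (k + 1) / ((k : ℝ) + 1) ^ 2) :=
  calc |∑ p ∈ Finset.Icc 1 k, a (k + 1 - p) * b p|
      ≤ ∑ p ∈ Finset.Icc 1 k,
          α * β * r ^ (k + 1) * (1 / (((k + 1 - p : ℕ) : ℝ) ^ 2 * (p : ℝ) ^ 2)) := by
        refine (Finset.abs_sum_le_sum_abs _ _).trans (Finset.sum_le_sum fun p hp => ?_)
        have hp' := Finset.mem_Icc.1 hp
        have hkp : k + 1 - p ∈ Finset.Icc 1 k := Finset.mem_Icc.2 ⟨by omega, by omega⟩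
        have hpow : r ^ (k + 1) = r ^ (k + 1 - p) * r ^ p := by rw [← pow_add]; congr 1; omega
        rw [abs_mul, hpow]
        calc |a (k + 1 - p)| * |b p|
            ≤ α * (r ^ (k + 1 - p) / ((k + 1 - p : ℕ) : ℝ) ^ 2) * (β * (r ^ p / (p : ℝ) ^ 2)) :=
              mul_le_mul (ha _ hkp) (hb p hp) (abs_nonneg _) (by positivity)
          _ = _ := by ring
    _ = α * β * r ^ (k + 1) *
          ∑ p ∈ Finset.Icc 1 k, 1 / (((k + 1 - p : ℕ) : ℝ) ^ 2 * (p : ℝ) ^ 2) :=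
        (Finset.mul_sum ..).symm
    _ ≤ α * β * r ^ (k + 1) * (6 / ((k : ℝ) + 1) ^ 2) := by
        gcongr; exact sum_Icc_one_div_sq_mul_sq_le k
    _ = 6 * (α * β) * (r ^ (k + 1) / ((k : ℝ) + 1) ^ 2) := by ring

theorem abs_neg_add_mul_le {s g v M U : ℝ} (hs : |s| ≤ M) (hv : |v| ≤ U) :
    |-s + g * v| ≤ M + U * |g| :=
  calc |-s + g * v| ≤ |s| + |g| * |v| := by rw [← abs_neg s, ← abs_mul]; exact abs_add_le _ _
    _ ≤ M + U * |g| := by rw [mul_comm U]; gcongr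

theorem abs_mul_le_of_abs_le {a b κ B : ℝ} (ha : |a| ≤ κ) (hb : |b| ≤ B) : |a * b| ≤ κ * B :=
  abs_mul a b ▸ mul_le_mul ha hb (abs_nonneg _) ((abs_nonneg _).trans ha)

theorem abs_sin_div_le (y ω : ℝ) : |sin y / ω| ≤ 1 / |ω| := by
  rw [abs_div]; gcongr; exact abs_sin_le_one y

theorem abs_cos_div_le (y ω : ℝ) : |cos y / ω| ≤ 1 / |ω| := by
  rw [abs_div]; gcongr; exact abs_cos_le_one y

theorem abs_sin_div_two_pi_mul_le (n : ℕ) (y : ℝ) : |sin y / (2 * π * n)| ≤ 1 / (2 * (π * n)) :=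
  (abs_sin_div_le _ _).trans_eq (by rw [abs_of_nonneg (by positivity), mul_assoc])

theorem abs_cos_div_two_pi_mul_le (n : ℕ) (y : ℝ) : |cos y / (2 * π * n)| ≤ 1 / (2 * (π * n)) :=
  (abs_cos_div_le _ _).trans_eq (by rw [abs_of_nonneg (by positivity), mul_assoc])

theorem IntervalIntegrable.mono_of_le {f : ℝ → ℝ} {a b c d : ℝ}
    (hf : IntervalIntegrable f volume a b) (hac : a ≤ c) (hcd : c ≤ d) (hdb : d ≤ b) :
    IntervalIntegrable f volume c d :=
  hf.mono_set (Set.uIcc_subset_uIcc (Set.mem_uIcc_of_le hac (hcd.trans hdb))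
    (Set.mem_uIcc_of_le (hac.trans hcd) hdb))

theorem abs_intervalIntegral_le_of_subinterval {f g : ℝ → ℝ} {a b a' b' κ M U : ℝ}
    (ha : a ≤ a') (hab : a' ≤ b') (hb : b' ≤ b) (hκ : 0 ≤ κ) (hM : 0 ≤ M) (hU : 0 ≤ U)
    (hg : IntervalIntegrable g volume a b)
    (hf : ∀ x ∈ Set.Ioc a' b', |f x| ≤ κ * (M + U * |g x|)) :
    |∫ x in a'..b', f x| ≤ κ * (M * (b - a) + U * ∫ x in a..b, |g x|) := by
  have hg' : IntervalIntegrable (fun x => |g x|) volume a' b' :=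
    hg.abs.mono_of_le ha hab hb
  calc |∫ x in a'..b', f x|
      ≤ ∫ x in a'..b', κ * (M + U * |g x|) :=
        intervalIntegral.norm_integral_le_of_norm_le hab
          (ae_of_all _ fun x hx => (Real.norm_eq_abs _).trans_le (hf x hx))
          ((intervalIntegrable_const.add (hg'.const_mul U)).const_mul κ)
    _ = κ * (M * (b' - a') + U * ∫ x in a'..b', |g x|) := by
        rw [intervalIntegral.integral_const_mul, intervalIntegral.integral_add
          intervalIntegrable_const (hg'.const_mul U), intervalIntegral.integral_const,
          intervalIntegral.integral_const_mul, smul_eq_mul, mul_comm (b' - a')]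
    _ ≤ κ * (M * (b - a) + U * ∫ x in a..b, |g x|) := by
        have hlen : b' - a' ≤ b - a := by linarith
        have hmass := intervalIntegral.integral_mono_interval ha hab hb
          (ae_of_all _ fun x => abs_nonneg (g x)) hg.abs
        gcongr

theorem summable_and_abs_tsum_tail_le {f : ℕ → ℝ} {C r : ℝ} (hr₀ : 0 ≤ r) (hr₁ : r < 1)
    (hf : ∀ j, 1 ≤ j → |f j| ≤ C * r ^ j) :
    Summable f ∧ ∀ m : ℕ, |∑' j, f (j + m + 1)| ≤ C * r ^ (m + 1) / (1 - r) := by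
  have htail : ∀ m : ℕ, HasSum (fun j => C * r ^ (m + 1) * r ^ j) (C * r ^ (m + 1) / (1 - r)) :=
    fun m => by simpa only [div_eq_mul_inv] using (hasSum_geometric_of_lt_one hr₀ hr₁).mul_left _
  have hbound : ∀ m j : ℕ, ‖f (j + m + 1)‖ ≤ C * r ^ (m + 1) * r ^ j := fun m j => by
    rw [Real.norm_eq_abs, mul_assoc, ← pow_add, add_comm (m + 1), ← add_assoc]
    exact hf _ (by omega)
  refine ⟨?_, fun m => tsum_of_norm_bounded (htail m) (hbound m)⟩
  exact (summable_nat_add_iff 1).1 ((htail 0).summable.of_norm_bounded (hbound 0))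

structure IsFDIteration (q : ℝ → ℝ) (n : ℕ) (L : ℕ → ℝ) (u₁ u₂ F₁ F₂ : ℕ → ℝ → ℝ)
    (c₂ : ℕ → ℝ) : Prop where
  u₁_zero : ∀ x, u₁ 0 x = sin (2 * π * n * x) / (2 * π * n)
  u₂_zero : ∀ x, u₂ 0 x = sin (2 * π * n * x) / (π * n)
  L_succ : ∀ j : ℕ, L (j + 1) = 8 * π * n / 3 *
    ((∫ x in (0 : ℝ)..1 / 2,
        (-(∑ p ∈ Finset.Icc 1 j, L (j + 1 - p) * u₁ p x) + q x * u₁ j x) * sin (2 * π * n * x)) +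
      ∫ x in (1 / 2 : ℝ)..1,
        (-(∑ p ∈ Finset.Icc 1 j, L (j + 1 - p) * u₂ p x) + q x * u₂ j x) * sin (2 * π * n * x))
  F₁_succ : ∀ (j : ℕ) (x : ℝ),
    F₁ (j + 1) x = -(∑ p ∈ Finset.range (j + 1), L (j + 1 - p) * u₁ p x) + q x * u₁ j x
  F₂_succ : ∀ (j : ℕ) (x : ℝ),
    F₂ (j + 1) x = -(∑ p ∈ Finset.range (j + 1), L (j + 1 - p) * u₂ p x) + q x * u₂ j x
  c₂_succ : ∀ j : ℕ, c₂ (j + 1) =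
    -(∫ x in (0 : ℝ)..1 / 2, cos (2 * π * n * x) / (2 * π * n) * F₁ (j + 1) x) -
      ∫ x in (1 / 2 : ℝ)..1, cos (2 * π * n * x) / (2 * π * n) * F₂ (j + 1) x
  u₁_succ : ∀ j : ℕ, ∀ x ∈ Set.Icc (0 : ℝ) (1 / 2),
    u₁ (j + 1) x = ∫ ξ in (0 : ℝ)..x, sin (2 * π * n * (x - ξ)) / (2 * π * n) * F₁ (j + 1) ξ
  u₂_succ : ∀ j : ℕ, ∀ x ∈ Set.Icc (1 / 2 : ℝ) 1,
    u₂ (j + 1) x = c₂ (j + 1) * sin (2 * π * n * (1 - x)) -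
      ∫ ξ in x..1, sin (2 * π * n * (x - ξ)) / (2 * π * n) * F₂ (j + 1) ξ

def LevelBound (L : ℕ → ℝ) (u₁ u₂ : ℕ → ℝ → ℝ) (j : ℕ) (a b₁ b₂ : ℝ) : Prop :=
  |L j| ≤ a ∧ (∀ x ∈ Set.Icc (0 : ℝ) (1 / 2), |u₁ j x| ≤ b₁) ∧
    ∀ x ∈ Set.Icc (1 / 2 : ℝ) 1, |u₂ j x| ≤ b₂

theorem LevelBound.mono {L : ℕ → ℝ} {u₁ u₂ : ℕ → ℝ → ℝ} {j : ℕ} {a b₁ b₂ a' b₁' b₂' : ℝ}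
    (h : LevelBound L u₁ u₂ j a b₁ b₂) (ha : a ≤ a') (hb₁ : b₁ ≤ b₁') (hb₂ : b₂ ≤ b₂') :
    LevelBound L u₁ u₂ j a' b₁' b₂' :=
  ⟨h.1.trans ha, fun x hx => (h.2.1 x hx).trans hb₁, fun x hx => (h.2.2 x hx).trans hb₂⟩

namespace IsFDIteration

variable {q : ℝ → ℝ} {n : ℕ} {L : ℕ → ℝ} {u₁ u₂ F₁ F₂ : ℕ → ℝ → ℝ} {c₂ : ℕ → ℝ}

theorem abs_u₁_zero_le (h : IsFDIteration q n L u₁ u₂ F₁ F₂ c₂) (x : ℝ) :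
    |u₁ 0 x| ≤ 1 / (2 * (π * n)) :=
  h.u₁_zero x ▸ abs_sin_div_two_pi_mul_le n _

theorem abs_u₂_zero_le (h : IsFDIteration q n L u₁ u₂ F₁ F₂ c₂) (x : ℝ) :
    |u₂ 0 x| ≤ 1 / (π * n) :=
  h.u₂_zero x ▸ (abs_sin_div_le _ _).trans_eq (by rw [abs_of_nonneg (by positivity)])

theorem F₁_succ_eq (h : IsFDIteration q n L u₁ u₂ F₁ F₂ c₂) (j : ℕ) (x : ℝ) :
    F₁ (j + 1) x =
      -(L (j + 1) * u₁ 0 x + ∑ p ∈ Finset.Icc 1 j, L (j + 1 - p) * u₁ p x) + q x * u₁ j x := by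
  rw [h.F₁_succ, Finset.range_eq_Ico, Finset.sum_eq_sum_Ico_succ_bot (Nat.add_one_pos j), zero_add,
    Finset.Ico_add_one_right_eq_Icc, Nat.sub_zero]

theorem F₂_succ_eq (h : IsFDIteration q n L u₁ u₂ F₁ F₂ c₂) (j : ℕ) (x : ℝ) :
    F₂ (j + 1) x =
      -(L (j + 1) * u₂ 0 x + ∑ p ∈ Finset.Icc 1 j, L (j + 1 - p) * u₂ p x) + q x * u₂ j x := by
  rw [h.F₂_succ, Finset.range_eq_Ico, Finset.sum_eq_sum_Ico_succ_bot (Nat.add_one_pos j), zero_add,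
    Finset.Ico_add_one_right_eq_Icc, Nat.sub_zero]

theorem abs_F₁_succ_le (h : IsFDIteration q n L u₁ u₂ F₁ F₂ c₂) {j : ℕ} {Λ M U : ℝ}
    (hΛ : |L (j + 1)| ≤ Λ)
    (hconv : ∀ x ∈ Set.Icc (0 : ℝ) (1 / 2), |∑ p ∈ Finset.Icc 1 j, L (j + 1 - p) * u₁ p x| ≤ M)
    (hu : ∀ x ∈ Set.Icc (0 : ℝ) (1 / 2), |u₁ j x| ≤ U) :
    ∀ x ∈ Set.Icc (0 : ℝ) (1 / 2), |F₁ (j + 1) x| ≤ (Λ / (2 * (π * n)) + M) + U * |q x| := by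
  intro x hx
  rw [h.F₁_succ_eq]
  refine abs_neg_add_mul_le ((abs_add_le _ _).trans (add_le_add ?_ (hconv x hx))) (hu x hx)
  simpa only [mul_one_div] using abs_mul_le_of_abs_le hΛ (h.abs_u₁_zero_le x)

theorem abs_F₂_succ_le (h : IsFDIteration q n L u₁ u₂ F₁ F₂ c₂) {j : ℕ} {Λ M U : ℝ}
    (hΛ : |L (j + 1)| ≤ Λ)
    (hconv : ∀ x ∈ Set.Icc (1 / 2 : ℝ) 1, |∑ p ∈ Finset.Icc 1 j, L (j + 1 - p) * u₂ p x| ≤ M)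
    (hu : ∀ x ∈ Set.Icc (1 / 2 : ℝ) 1, |u₂ j x| ≤ U) :
    ∀ x ∈ Set.Icc (1 / 2 : ℝ) 1, |F₂ (j + 1) x| ≤ (Λ / (π * n) + M) + U * |q x| := by
  intro x hx
  rw [h.F₂_succ_eq]
  refine abs_neg_add_mul_le ((abs_add_le _ _).trans (add_le_add ?_ (hconv x hx))) (hu x hx)
  simpa only [mul_one_div] using abs_mul_le_of_abs_le hΛ (h.abs_u₂_zero_le x)

theorem abs_L_succ_le (h : IsFDIteration q n L u₁ u₂ F₁ F₂ c₂)
    (hq : IntervalIntegrable q volume 0 1) {j : ℕ} {M₁ M₂ U₁ U₂ : ℝ}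
    (hM₁ : 0 ≤ M₁) (hM₂ : 0 ≤ M₂) (hU₁ : 0 ≤ U₁) (hU₂ : 0 ≤ U₂)
    (hconv₁ : ∀ x ∈ Set.Icc (0 : ℝ) (1 / 2), |∑ p ∈ Finset.Icc 1 j, L (j + 1 - p) * u₁ p x| ≤ M₁)
    (hconv₂ : ∀ x ∈ Set.Icc (1 / 2 : ℝ) 1, |∑ p ∈ Finset.Icc 1 j, L (j + 1 - p) * u₂ p x| ≤ M₂)
    (hu₁ : ∀ x ∈ Set.Icc (0 : ℝ) (1 / 2), |u₁ j x| ≤ U₁)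
    (hu₂ : ∀ x ∈ Set.Icc (1 / 2 : ℝ) 1, |u₂ j x| ≤ U₂) :
    |L (j + 1)| ≤ 8 * (π * n) / 3 * ((M₁ / 2 + U₁ * ∫ x in (0 : ℝ)..1 / 2, |q x|) +
      (M₂ / 2 + U₂ * ∫ x in (1 / 2 : ℝ)..1, |q x|)) := by
  have hI₁ := abs_intervalIntegral_le_of_subinterval le_rfl (by norm_num) le_rfl zero_le_one hM₁
    hU₁ (hq.mono_of_le le_rfl (by norm_num) (by norm_num)) fun x hx =>
      (abs_mul_le_of_abs_le (abs_neg_add_mul_le (hconv₁ x (Set.Ioc_subset_Icc_self hx))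
        (hu₁ x (Set.Ioc_subset_Icc_self hx))) (abs_sin_le_one (2 * π * n * x))).trans_eq
        (mul_comm _ _)
  have hI₂ := abs_intervalIntegral_le_of_subinterval le_rfl (by norm_num) le_rfl zero_le_one hM₂
    hU₂ (hq.mono_of_le (by norm_num) (by norm_num) le_rfl) fun x hx =>
      (abs_mul_le_of_abs_le (abs_neg_add_mul_le (hconv₂ x (Set.Ioc_subset_Icc_self hx))
        (hu₂ x (Set.Ioc_subset_Icc_self hx))) (abs_sin_le_one (2 * π * n * x))).trans_eq
        (mul_comm _ _)
  rw [h.L_succ, abs_mul, abs_of_nonneg (by positivity), mul_assoc 8 π]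
  gcongr
  refine (abs_add_le _ _).trans ((add_le_add hI₁ hI₂).trans_eq ?_)
  ring

theorem abs_u₁_succ_le (h : IsFDIteration q n L u₁ u₂ F₁ F₂ c₂)
    (hq : IntervalIntegrable q volume 0 1) {j : ℕ} {K U : ℝ} (hK : 0 ≤ K) (hU : 0 ≤ U)
    (hF : ∀ x ∈ Set.Icc (0 : ℝ) (1 / 2), |F₁ (j + 1) x| ≤ K + U * |q x|) :
    ∀ x ∈ Set.Icc (0 : ℝ) (1 / 2),
      |u₁ (j + 1) x| ≤ 1 / (2 * (π * n)) * (K / 2 + U * ∫ x in (0 : ℝ)..1 / 2, |q x|) := by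
  intro x hx
  rw [h.u₁_succ j x hx]
  refine (abs_intervalIntegral_le_of_subinterval le_rfl hx.1 hx.2 (by positivity) hK hU
    (hq.mono_of_le le_rfl (by norm_num) (by norm_num)) fun ξ hξ =>
      abs_mul_le_of_abs_le (abs_sin_div_two_pi_mul_le n _)
        (hF ξ ⟨hξ.1.le, hξ.2.trans hx.2⟩)).trans_eq ?_
  ring

theorem abs_c₂_succ_le (h : IsFDIteration q n L u₁ u₂ F₁ F₂ c₂)
    (hq : IntervalIntegrable q volume 0 1) {j : ℕ} {K₁ K₂ U₁ U₂ : ℝ}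
    (hK₁ : 0 ≤ K₁) (hK₂ : 0 ≤ K₂) (hU₁ : 0 ≤ U₁) (hU₂ : 0 ≤ U₂)
    (hF₁ : ∀ x ∈ Set.Icc (0 : ℝ) (1 / 2), |F₁ (j + 1) x| ≤ K₁ + U₁ * |q x|)
    (hF₂ : ∀ x ∈ Set.Icc (1 / 2 : ℝ) 1, |F₂ (j + 1) x| ≤ K₂ + U₂ * |q x|) :
    |c₂ (j + 1)| ≤ 1 / (2 * (π * n)) * (K₁ / 2 + U₁ * ∫ x in (0 : ℝ)..1 / 2, |q x|) +
      1 / (2 * (π * n)) * (K₂ / 2 + U₂ * ∫ x in (1 / 2 : ℝ)..1, |q x|) := by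
  have hI₁ := abs_intervalIntegral_le_of_subinterval le_rfl (by norm_num) le_rfl (by positivity)
    hK₁ hU₁ (hq.mono_of_le le_rfl (by norm_num) (by norm_num)) fun x hx =>
      abs_mul_le_of_abs_le (abs_cos_div_two_pi_mul_le n (2 * π * n * x))
        (hF₁ x (Set.Ioc_subset_Icc_self hx))
  have hI₂ := abs_intervalIntegral_le_of_subinterval le_rfl (by norm_num) le_rfl (by positivity)
    hK₂ hU₂ (hq.mono_of_le (by norm_num) (by norm_num) le_rfl) fun x hx =>
      abs_mul_le_of_abs_le (abs_cos_div_two_pi_mul_le n (2 * π * n * x))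
        (hF₂ x (Set.Ioc_subset_Icc_self hx))
  rw [h.c₂_succ]
  refine (abs_sub _ _).trans ?_
  rw [abs_neg]
  refine (add_le_add hI₁ hI₂).trans_eq ?_
  ring

theorem abs_u₂_succ_le (h : IsFDIteration q n L u₁ u₂ F₁ F₂ c₂)
    (hq : IntervalIntegrable q volume 0 1) {j : ℕ} {K₁ K₂ U₁ U₂ : ℝ}
    (hK₁ : 0 ≤ K₁) (hK₂ : 0 ≤ K₂) (hU₁ : 0 ≤ U₁) (hU₂ : 0 ≤ U₂)
    (hF₁ : ∀ x ∈ Set.Icc (0 : ℝ) (1 / 2), |F₁ (j + 1) x| ≤ K₁ + U₁ * |q x|)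
    (hF₂ : ∀ x ∈ Set.Icc (1 / 2 : ℝ) 1, |F₂ (j + 1) x| ≤ K₂ + U₂ * |q x|) :
    ∀ x ∈ Set.Icc (1 / 2 : ℝ) 1,
      |u₂ (j + 1) x| ≤ 1 / (2 * (π * n)) * (K₁ / 2 + U₁ * ∫ x in (0 : ℝ)..1 / 2, |q x|) +
        1 / (π * n) * (K₂ / 2 + U₂ * ∫ x in (1 / 2 : ℝ)..1, |q x|) := by
  intro x hx
  have hc := h.abs_c₂_succ_le hq hK₁ hK₂ hU₁ hU₂ hF₁ hF₂
  have htail := abs_intervalIntegral_le_of_subinterval hx.1 hx.2 le_rfl (by positivity) hK₂ hU₂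
    (hq.mono_of_le (by norm_num) (by norm_num) le_rfl) fun ξ hξ =>
      abs_mul_le_of_abs_le (abs_sin_div_two_pi_mul_le n (2 * π * n * (x - ξ)))
        (hF₂ ξ ⟨hx.1.trans hξ.1.le, hξ.2⟩)
  have hsin : |c₂ (j + 1) * sin (2 * π * n * (1 - x))| ≤ |c₂ (j + 1)| := by
    rw [abs_mul]; exact mul_le_of_le_one_right (abs_nonneg _) (abs_sin_le_one _)
  rw [h.u₂_succ j x hx]
  refine (abs_sub _ _).trans ((add_le_add (hsin.trans hc) htail).trans_eq ?_)
  ring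

theorem levelBound_succ (h : IsFDIteration q n L u₁ u₂ F₁ F₂ c₂)
    (hq : IntervalIntegrable q volume 0 1) (hn : 0 < n) {j : ℕ}
    {w U₁ U₂ A B₁ B₂ μ₁ μ₂ ν₁ ν : ℝ} (hw : 0 ≤ w) (hU₁ : 0 ≤ U₁) (hU₂ : 0 ≤ U₂) (hA : 0 ≤ A)
    (hμ₁ : 0 ≤ μ₁) (hμ₂ : 0 ≤ μ₂)
    (hconv₁ : ∀ x ∈ Set.Icc (0 : ℝ) (1 / 2),
      |∑ p ∈ Finset.Icc 1 j, L (j + 1 - p) * u₁ p x| ≤ μ₁ * w)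
    (hconv₂ : ∀ x ∈ Set.Icc (1 / 2 : ℝ) 1,
      |∑ p ∈ Finset.Icc 1 j, L (j + 1 - p) * u₂ p x| ≤ μ₂ * w)
    (hu₁ : ∀ x ∈ Set.Icc (0 : ℝ) (1 / 2), |u₁ j x| ≤ U₁)
    (hu₂ : ∀ x ∈ Set.Icc (1 / 2 : ℝ) 1, |u₂ j x| ≤ U₂)
    (hν₁ : U₁ * ∫ x in (0 : ℝ)..1 / 2, |q x| ≤ ν₁ * w)
    (hν : U₁ * (∫ x in (0 : ℝ)..1 / 2, |q x|) + U₂ * (∫ x in (1 / 2 : ℝ)..1, |q x|) ≤ ν * w)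
    (hAμν : 8 / 3 * ((μ₁ + μ₂) / 2 + ν) ≤ A) (hB₁ : (A / 2 + μ₁) / 4 + ν₁ / 2 ≤ B₁)
    (hB₂ : (A / 2 + μ₁) / 4 + (A + μ₂) / 2 + ν ≤ B₂) :
    LevelBound L u₁ u₂ (j + 1) (A * (π * n) * w) (B₁ / (π * n) * w) (B₂ / (π * n) * w) := by
  set N := π * n
  set Q₁ := ∫ x in (0 : ℝ)..1 / 2, |q x|
  set Q₂ := ∫ x in (1 / 2 : ℝ)..1, |q x|
  have hN : 0 < N := by positivity
  have hUQ₁ : 0 ≤ U₁ * Q₁ :=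
    mul_nonneg hU₁ (intervalIntegral.integral_nonneg (by norm_num) fun x _ => abs_nonneg (q x))
  have hL : |L (j + 1)| ≤ A * N * w := by
    refine (h.abs_L_succ_le hq (by positivity) (by positivity) hU₁ hU₂ hconv₁ hconv₂ hu₁
      hu₂).trans ?_
    calc 8 * N / 3 * ((μ₁ * w / 2 + U₁ * Q₁) + (μ₂ * w / 2 + U₂ * Q₂))
        ≤ 8 * N / 3 * (((μ₁ + μ₂) / 2 + ν) * w) := by gcongr; linarith
      _ = N * (8 / 3 * ((μ₁ + μ₂) / 2 + ν)) * w := by ring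
      _ ≤ A * N * w := by rw [mul_comm A]; gcongr
  have hF₁ := h.abs_F₁_succ_le hL hconv₁ hu₁
  have hF₂ := h.abs_F₂_succ_le hL hconv₂ hu₂
  rw [show A * N * w / (2 * N) = A / 2 * w by field_simp] at hF₁
  rw [show A * N * w / N = A * w by field_simp] at hF₂
  have hK₁ : 0 ≤ A / 2 * w + μ₁ * w := by positivity
  have hK₂ : 0 ≤ A * w + μ₂ * w := by positivity
  refine ⟨hL, fun x hx => (h.abs_u₁_succ_le hq hK₁ hU₁ hF₁ x hx).trans ?_,
    fun x hx => (h.abs_u₂_succ_le hq hK₁ hK₂ hU₁ hU₂ hF₁ hF₂ x hx).trans ?_⟩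
  · calc 1 / (2 * N) * ((A / 2 * w + μ₁ * w) / 2 + U₁ * Q₁)
        ≤ 1 / (2 * N) * ((A / 2 * w + μ₁ * w) / 2 + ν₁ * w) := by gcongr
      _ = ((A / 2 + μ₁) / 4 + ν₁ / 2) / N * w := by field_simp; ring
      _ ≤ B₁ / N * w := by gcongr
  · calc 1 / (2 * N) * ((A / 2 * w + μ₁ * w) / 2 + U₁ * Q₁) +
          1 / N * ((A * w + μ₂ * w) / 2 + U₂ * Q₂)
        = ((A / 2 + μ₁) / 4 + (A + μ₂) / 2) / N * w + (U₁ * Q₁ / 2 + U₂ * Q₂) / N := by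
          field_simp; ring
      _ ≤ ((A / 2 + μ₁) / 4 + (A + μ₂) / 2) / N * w + ν * w / N := by gcongr; linarith
      _ = ((A / 2 + μ₁) / 4 + (A + μ₂) / 2 + ν) / N * w := by ring
      _ ≤ B₂ / N * w := by gcongr

theorem levelBound_one (h : IsFDIteration q n L u₁ u₂ F₁ F₂ c₂)
    (hq : IntervalIntegrable q volume 0 1) (hn : 0 < n) {r : ℝ} (hr : 0 ≤ r)
    (hQ : ∫ x in (0 : ℝ)..1, |q x| ≤ π * n * r / 40) :
    LevelBound L u₁ u₂ 1 (1 / 15 * (π * n) * r) (1 / 60 / (π * n) * r) (1 / 15 / (π * n) * r) := by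
  set N := π * n
  set Q₁ := ∫ x in (0 : ℝ)..1 / 2, |q x|
  set Q₂ := ∫ x in (1 / 2 : ℝ)..1, |q x|
  have hN : 0 < N := by positivity
  have hQ₁₀ : 0 ≤ Q₁ := intervalIntegral.integral_nonneg (by norm_num) fun x _ => abs_nonneg (q x)
  have hQ₂₀ : 0 ≤ Q₂ := intervalIntegral.integral_nonneg (by norm_num) fun x _ => abs_nonneg (q x)
  have hQ₁₂ : Q₁ + Q₂ ≤ N * r / 40 := by
    rwa [intervalIntegral.integral_add_adjacent_intervals
      (hq.mono_of_le le_rfl (by norm_num) (by norm_num)).abs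
      (hq.mono_of_le (by norm_num) (by norm_num) le_rfl).abs]
  refine h.levelBound_succ hq hn (μ₁ := 0) (μ₂ := 0) (ν₁ := 1 / 80) (ν := 1 / 40) hr
    (by positivity) (by positivity) (by norm_num) le_rfl le_rfl (fun x _ => by simp)
    (fun x _ => by simp) (fun x _ => h.abs_u₁_zero_le x) (fun x _ => h.abs_u₂_zero_le x)
    ?_ ?_ (by norm_num) (by norm_num) (by norm_num)
  · calc 1 / (2 * N) * Q₁ ≤ 1 / (2 * N) * (N * r / 40) := by gcongr; linarith
      _ = 1 / 80 * r := by field_simp; ring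
  · calc 1 / (2 * N) * Q₁ + 1 / N * Q₂ ≤ 1 / N * (Q₁ + Q₂) := by
          rw [mul_add]; gcongr; linarith
      _ ≤ 1 / N * (N * r / 40) := by gcongr
      _ = 1 / 40 * r := by field_simp

theorem levelBound_succ_of_inv_sq (h : IsFDIteration q n L u₁ u₂ F₁ F₂ c₂)
    (hq : IntervalIntegrable q volume 0 1) (hn : 0 < n) {r : ℝ} (hr : 0 ≤ r)
    (hQ : ∫ x in (0 : ℝ)..1, |q x| ≤ π * n * r / 40) {k : ℕ} (hk : 1 ≤ k)
    (ih : ∀ p ∈ Finset.Icc 1 k, LevelBound L u₁ u₂ p (1 / 15 * (π * n) * (r ^ p / (p : ℝ) ^ 2))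
      (1 / 60 / (π * n) * (r ^ p / (p : ℝ) ^ 2)) (1 / 15 / (π * n) * (r ^ p / (p : ℝ) ^ 2))) :
    LevelBound L u₁ u₂ (k + 1) (1 / 15 * (π * n) * (r ^ (k + 1) / ((k : ℝ) + 1) ^ 2))
      (1 / 60 / (π * n) * (r ^ (k + 1) / ((k : ℝ) + 1) ^ 2))
      (1 / 15 / (π * n) * (r ^ (k + 1) / ((k : ℝ) + 1) ^ 2)) := by
  set N := π * n
  have hN : 0 < N := by positivity
  have hQ₁ : ∫ x in (0 : ℝ)..1 / 2, |q x| ≤ N * r / 40 :=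
    (intervalIntegral.integral_mono_interval le_rfl (by norm_num) (by norm_num)
      (ae_of_all _ fun x => abs_nonneg (q x)) hq.abs).trans hQ
  have hQ₂ : ∫ x in (1 / 2 : ℝ)..1, |q x| ≤ N * r / 40 :=
    (intervalIntegral.integral_mono_interval (by norm_num) (by norm_num) le_rfl
      (ae_of_all _ fun x => abs_nonneg (q x)) hq.abs).trans hQ
  have hUQ : ∀ B Q' : ℝ, 0 ≤ B → Q' ≤ N * r / 40 →
      B / N * (r ^ k / (k : ℝ) ^ 2) * Q' ≤ B / 10 * (r ^ (k + 1) / ((k : ℝ) + 1) ^ 2) := by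
    intro B Q' hB hQ'
    calc B / N * (r ^ k / (k : ℝ) ^ 2) * Q' ≤ B / N * (r ^ k / (k : ℝ) ^ 2) * (N * r / 40) := by
          gcongr
      _ = B / 40 * (r * (r ^ k / (k : ℝ) ^ 2)) := by field_simp
      _ ≤ B / 40 * (4 * (r ^ (k + 1) / ((k : ℝ) + 1) ^ 2)) := by
          gcongr ?_ * ?_; exact pow_succ_div_sq_le hr hk
      _ = B / 10 * (r ^ (k + 1) / ((k : ℝ) + 1) ^ 2) := by ring
  have hαβ : ∀ B : ℝ, 1 / 15 * N * (B / N) = 1 / 15 * B := fun B => by field_simp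
  have ihk := ih k (Finset.mem_Icc.2 ⟨hk, le_rfl⟩)
  refine h.levelBound_succ hq hn (μ₁ := 6 * (1 / 15 * (1 / 60))) (μ₂ := 6 * (1 / 15 * (1 / 15)))
    (ν₁ := 1 / 60 / 10) (ν := (1 / 60 + 1 / 15) / 10) (by positivity) (by positivity)
    (by positivity) (by norm_num) (by norm_num) (by norm_num) (fun x hx => ?_) (fun x hx => ?_)
    ihk.2.1 ihk.2.2 (hUQ _ _ (by norm_num) hQ₁)
    (by linarith [hUQ _ _ (by norm_num : (0 : ℝ) ≤ 1 / 60) hQ₁,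
      hUQ _ _ (by norm_num : (0 : ℝ) ≤ 1 / 15) hQ₂])
    (by norm_num) (by norm_num) (by norm_num)
  · rw [← hαβ]
    exact abs_sum_Icc_convolution_le (by positivity) (by positivity) hr
      (fun p hp => (ih p hp).1) (fun p hp => (ih p hp).2.1 x hx)
  · rw [← hαβ]
    exact abs_sum_Icc_convolution_le (by positivity) (by positivity) hr
      (fun p hp => (ih p hp).1) (fun p hp => (ih p hp).2.2 x hx)

theorem levelBound_inv_sq (h : IsFDIteration q n L u₁ u₂ F₁ F₂ c₂)
    (hq : IntervalIntegrable q volume 0 1) (hn : 0 < n) {r : ℝ} (hr : 0 ≤ r)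
    (hQ : ∫ x in (0 : ℝ)..1, |q x| ≤ π * n * r / 40) {j : ℕ} (hj : 1 ≤ j) :
    LevelBound L u₁ u₂ j (1 / 15 * (π * n) * (r ^ j / (j : ℝ) ^ 2))
      (1 / 60 / (π * n) * (r ^ j / (j : ℝ) ^ 2)) (1 / 15 / (π * n) * (r ^ j / (j : ℝ) ^ 2)) := by
  induction j using Nat.strong_induction_on with
  | _ j ih =>
  obtain ⟨k, rfl⟩ : ∃ k, j = k + 1 := ⟨j - 1, by omega⟩
  rcases Nat.eq_zero_or_pos k with rfl | hk
  · simpa using h.levelBound_one hq hn hr hQ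
  · rw [Nat.cast_succ]
    exact h.levelBound_succ_of_inv_sq hq hn hr hQ hk fun p hp =>
      ih p (Nat.lt_succ_of_le (Finset.mem_Icc.1 hp).2) (Finset.mem_Icc.1 hp).1

theorem levelBound_geometric (h : IsFDIteration q n L u₁ u₂ F₁ F₂ c₂)
    (hq : IntervalIntegrable q volume 0 1) (hn : 0 < n) {r : ℝ} (hr : 0 ≤ r)
    (hQ : ∫ x in (0 : ℝ)..1, |q x| ≤ π * n * r / 40) {j : ℕ} (hj : 1 ≤ j) :
    LevelBound L u₁ u₂ j ((1 / 15 * (π * n) + 1 / 15 / (π * n)) * r ^ j)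
      ((1 / 15 * (π * n) + 1 / 15 / (π * n)) * r ^ j)
      ((1 / 15 * (π * n) + 1 / 15 / (π * n)) * r ^ j) := by
  have hN : 0 < π * n := by positivity
  have hw : r ^ j / (j : ℝ) ^ 2 ≤ r ^ j :=
    div_le_self (pow_nonneg hr j) (one_le_pow₀ (Nat.one_le_cast.2 hj))
  have hweight : ∀ B, B ≤ 1 / 15 * (π * n) + 1 / 15 / (π * n) →
      B * (r ^ j / (j : ℝ) ^ 2) ≤ (1 / 15 * (π * n) + 1 / 15 / (π * n)) * r ^ j :=
    fun B hB => mul_le_mul hB hw (by positivity) (by positivity)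
  have hCu₂ : 1 / 15 / (π * n) ≤ 1 / 15 * (π * n) + 1 / 15 / (π * n) :=
    le_add_of_nonneg_left (by positivity)
  exact (h.levelBound_inv_sq hq hn hr hQ hj).mono
    (hweight _ (le_add_of_nonneg_right (by positivity)))
    (hweight _ ((div_le_div_of_nonneg_right (by norm_num) hN.le).trans hCu₂)) (hweight _ hCu₂)

end IsFDIteration

theorem stmt_17_general (q : ℝ → ℝ) (hq : IntegrableOn q (Set.Ioo 0 1))
    (Q : ℝ) (hQ : Q = ∫ x in (0:ℝ)..1, |q x|)
    (n : ℕ) (hn : 0 < n)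
    (L : ℕ → ℝ) (u₁ u₂ F₁ F₂ : ℕ → ℝ → ℝ) (c₂ : ℕ → ℝ)
    (hu₁0 : ∀ x, u₁ 0 x = Real.sin (2 * π * (n : ℝ) * x) / (2 * π * (n : ℝ)))
    (hu₂0 : ∀ x, u₂ 0 x = Real.sin (2 * π * (n : ℝ) * x) / (π * (n : ℝ)))
    (hLrec : ∀ j : ℕ, L (j+1) = (8 * π * (n : ℝ) / 3) *
      ((∫ x in (0:ℝ)..(1/2),
          (-(∑ p ∈ Finset.Icc 1 j, L (j+1-p) * u₁ p x) + q x * u₁ j x) *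
            Real.sin (2 * π * (n : ℝ) * x)) +
       ∫ x in (1/2:ℝ)..1,
          (-(∑ p ∈ Finset.Icc 1 j, L (j+1-p) * u₂ p x) + q x * u₂ j x) *
            Real.sin (2 * π * (n : ℝ) * x)))
    (hF₁ : ∀ (j : ℕ) (x : ℝ),
      F₁ (j+1) x = -(∑ p ∈ Finset.range (j+1), L (j+1-p) * u₁ p x) + q x * u₁ j x)
    (hF₂ : ∀ (j : ℕ) (x : ℝ),
      F₂ (j+1) x = -(∑ p ∈ Finset.range (j+1), L (j+1-p) * u₂ p x) + q x * u₂ j x)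
    (hc₂ : ∀ j : ℕ, c₂ (j+1) =
      -(∫ x in (0:ℝ)..(1/2), (Real.cos (2 * π * (n : ℝ) * x) / (2 * π * (n : ℝ))) * F₁ (j+1) x) -
       ∫ x in (1/2:ℝ)..1, (Real.cos (2 * π * (n : ℝ) * x) / (2 * π * (n : ℝ))) * F₂ (j+1) x)
    (hu₁rec : ∀ j : ℕ, ∀ x ∈ Set.Icc (0:ℝ) (1/2),
      u₁ (j+1) x = ∫ ξ in (0:ℝ)..x,
        (Real.sin (2 * π * (n : ℝ) * (x - ξ)) / (2 * π * (n : ℝ))) * F₁ (j+1) ξ)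
    (hu₂rec : ∀ j : ℕ, ∀ x ∈ Set.Icc (1/2:ℝ) 1,
      u₂ (j+1) x = c₂ (j+1) * Real.sin (2 * π * (n : ℝ) * (1 - x)) -
        ∫ ξ in x..(1:ℝ),
          (Real.sin (2 * π * (n : ℝ) * (x - ξ)) / (2 * π * (n : ℝ))) * F₂ (j+1) ξ)
    (r : ℝ)
    (hr : r = (11/3) * Q * (1 + 16/3 + 2 * Real.sqrt (88/9)) / (π * (n : ℝ)))
    (hrlt : r < 1) :
    ∃ C > 0,
      (∀ j : ℕ, 1 ≤ j → |L j| ≤ C * r ^ j ∧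
        (∀ x ∈ Set.Icc (0:ℝ) (1/2), |u₁ j x| ≤ C * r ^ j) ∧
        (∀ x ∈ Set.Icc (1/2:ℝ) 1, |u₂ j x| ≤ C * r ^ j)) ∧
      Summable (fun j => |L j|) ∧
      (∀ x ∈ Set.Icc (0:ℝ) (1/2), Summable (fun j => u₁ j x)) ∧
      (∀ x ∈ Set.Icc (1/2:ℝ) 1, Summable (fun j => u₂ j x)) ∧
      (∀ m' : ℕ, (∑' j : ℕ, |L (j + m' + 1)|) ≤ C * r ^ (m' + 1) / (1 - r)) ∧
      (∀ m' : ℕ, ∀ x ∈ Set.Icc (0:ℝ) (1/2),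
        |∑' j : ℕ, u₁ (j + m' + 1) x| ≤ C * r ^ (m' + 1) / (1 - r)) ∧
      (∀ m' : ℕ, ∀ x ∈ Set.Icc (1/2:ℝ) 1,
        |∑' j : ℕ, u₂ (j + m' + 1) x| ≤ C * r ^ (m' + 1) / (1 - r)) := by
  have hFD : IsFDIteration q n L u₁ u₂ F₁ F₂ c₂ :=
    ⟨hu₁0, hu₂0, hLrec, hF₁, hF₂, hc₂, hu₁rec, hu₂rec⟩
  have hN : 0 < π * n := by positivity
  have hQ₀ : 0 ≤ Q := hQ ▸ intervalIntegral.integral_nonneg zero_le_one fun x _ => abs_nonneg _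
  have hsqrt : 3 ≤ √(88 / 9) := Real.le_sqrt_of_sq_le (by norm_num)
  have hr₀ : 0 ≤ r := hr ▸ by positivity
  have hQr : ∫ x in (0 : ℝ)..1, |q x| ≤ π * n * r / 40 := by
    rw [← hQ, hr, mul_div_cancel₀ _ hN.ne']
    nlinarith
  have hqi : IntervalIntegrable q volume 0 1 :=
    (intervalIntegrable_iff_integrableOn_Ioo_of_le zero_le_one).2 hq
  set C := 1 / 15 * (π * n) + 1 / 15 / (π * n)
  have hbound : ∀ j, 1 ≤ j → LevelBound L u₁ u₂ j (C * r ^ j) (C * r ^ j) (C * r ^ j) :=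
    fun j hj => hFD.levelBound_geometric hqi hn hr₀ hQr hj
  have hseries := fun (f : ℕ → ℝ) (hf : ∀ j, 1 ≤ j → |f j| ≤ C * r ^ j) =>
    summable_and_abs_tsum_tail_le hr₀ hrlt hf
  obtain ⟨hLsum, hLtail⟩ :=
    hseries (fun j => |L j|) fun j hj => (abs_abs (L j)).symm ▸ (hbound j hj).1
  refine ⟨C, by positivity, hbound, hLsum,
    fun x hx => (hseries _ fun j hj => (hbound j hj).2.1 x hx).1,
    fun x hx => (hseries _ fun j hj => (hbound j hj).2.2 x hx).1,
    fun m => (le_abs_self _).trans (hLtail m),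
    fun m x hx => (hseries _ fun j hj => (hbound j hj).2.1 x hx).2 m,
    fun m x hx => (hseries _ fun j hj => (hbound j hj).2.2 x hx).2 m⟩

/-- convergence (Theorem 2.1(b)) of the FD-method for the linear
eigenvalue transmission problem with `q ∈ L¹(0,1)`, for the second family of base
eigenvalues `λ⁽⁰⁾ = 4π²n²` with `n` even. -/
theorem stmt_17 (q : ℝ → ℝ) (hq : IntegrableOn q (Set.Ioo 0 1))
    (Q : ℝ) (hQ : Q = ∫ x in (0:ℝ)..1, |q x|)
    (n : ℕ) (hn : 0 < n) (hneven : Even n)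
    (lam0 : ℝ) (hlam0 : lam0 = 4 * π ^ 2 * (n : ℝ) ^ 2)
    (L : ℕ → ℝ) (u₁ u₂ F₁ F₂ : ℕ → ℝ → ℝ) (c₂ : ℕ → ℝ)
    (hL0 : L 0 = lam0)
    (hu₁0 : ∀ x, u₁ 0 x = Real.sin (2 * π * (n : ℝ) * x) / (2 * π * (n : ℝ)))
    (hu₂0 : ∀ x, u₂ 0 x = Real.sin (2 * π * (n : ℝ) * x) / (π * (n : ℝ)))
    (hLrec : ∀ j : ℕ, L (j+1) = (8 * π * (n : ℝ) / 3) *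
      ((∫ x in (0:ℝ)..(1/2),
          (-(∑ p ∈ Finset.Icc 1 j, L (j+1-p) * u₁ p x) + q x * u₁ j x) *
            Real.sin (2 * π * (n : ℝ) * x)) +
       ∫ x in (1/2:ℝ)..1,
          (-(∑ p ∈ Finset.Icc 1 j, L (j+1-p) * u₂ p x) + q x * u₂ j x) *
            Real.sin (2 * π * (n : ℝ) * x)))
    (hF₁ : ∀ (j : ℕ) (x : ℝ),
      F₁ (j+1) x = -(∑ p ∈ Finset.range (j+1), L (j+1-p) * u₁ p x) + q x * u₁ j x)
    (hF₂ : ∀ (j : ℕ) (x : ℝ),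
      F₂ (j+1) x = -(∑ p ∈ Finset.range (j+1), L (j+1-p) * u₂ p x) + q x * u₂ j x)
    (hc₂ : ∀ j : ℕ, c₂ (j+1) =
      -(∫ x in (0:ℝ)..(1/2), (Real.cos (2 * π * (n : ℝ) * x) / (2 * π * (n : ℝ))) * F₁ (j+1) x) -
       ∫ x in (1/2:ℝ)..1, (Real.cos (2 * π * (n : ℝ) * x) / (2 * π * (n : ℝ))) * F₂ (j+1) x)
    (hu₁rec : ∀ j : ℕ, ∀ x ∈ Set.Icc (0:ℝ) (1/2),
      u₁ (j+1) x = ∫ ξ in (0:ℝ)..x,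
        (Real.sin (2 * π * (n : ℝ) * (x - ξ)) / (2 * π * (n : ℝ))) * F₁ (j+1) ξ)
    (hu₂rec : ∀ j : ℕ, ∀ x ∈ Set.Icc (1/2:ℝ) 1,
      u₂ (j+1) x = c₂ (j+1) * Real.sin (2 * π * (n : ℝ) * (1 - x)) -
        ∫ ξ in x..(1:ℝ),
          (Real.sin (2 * π * (n : ℝ) * (x - ξ)) / (2 * π * (n : ℝ))) * F₂ (j+1) ξ)
    (r : ℝ)
    (hr : r = (11/3) * Q * (1 + 16/3 + 2 * Real.sqrt (88/9)) / (π * (n : ℝ)))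
    (hrlt : r < 1) :
    ∃ C > 0,
      (∀ j : ℕ, 1 ≤ j → |L j| ≤ C * r ^ j ∧
        (∀ x ∈ Set.Icc (0:ℝ) (1/2), |u₁ j x| ≤ C * r ^ j) ∧
        (∀ x ∈ Set.Icc (1/2:ℝ) 1, |u₂ j x| ≤ C * r ^ j)) ∧
      Summable (fun j => |L j|) ∧
      (∀ x ∈ Set.Icc (0:ℝ) (1/2), Summable (fun j => u₁ j x)) ∧
      (∀ x ∈ Set.Icc (1/2:ℝ) 1, Summable (fun j => u₂ j x)) ∧
      (∀ m' : ℕ, (∑' j : ℕ, |L (j + m' + 1)|) ≤ C * r ^ (m' + 1) / (1 - r)) ∧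
      (∀ m' : ℕ, ∀ x ∈ Set.Icc (0:ℝ) (1/2),
        |∑' j : ℕ, u₁ (j + m' + 1) x| ≤ C * r ^ (m' + 1) / (1 - r)) ∧
      (∀ m' : ℕ, ∀ x ∈ Set.Icc (1/2:ℝ) 1,
        |∑' j : ℕ, u₂ (j + m' + 1) x| ≤ C * r ^ (m' + 1) / (1 - r)) :=
  stmt_17_general q hq Q hQ n hn L u₁ u₂ F₁ F₂ c₂ hu₁0 hu₂0 hLrec hF₁ hF₂ hc₂ hu₁rec hu₂rec r hr
    hrlt
end
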